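/- arXiv:2605.03523 — 12 statements merged into one kernel-verified Lean document; each statement's English description precedes it below -/
import Mathlib

section
/- Let B be a barrier on an infinite set X ⊆ ℕ. A subset B' ⊆ B is itself a barrier (on some infinite set) if and only if there exists an infinite Y ⊆ X such that B' = B|Y = { s ∈ B : s ⊆ Y }. -/
/-- `s` is an initial segment of `Y` with respect to the increasing enumeration:
`s ⊆ Y` and every element of `Y` not in `s` is larger than every element of `s`. -/
def IsInitSeg (s : Finset ℕ) (Y : Set ℕ) : Prop :=
  ↑s ⊆ Y ∧ ∀ y ∈ Y, y ∉ s → ∀ x ∈ s, x < y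

/-- `B` is a barrier on `X`: (Base) the union of elements of `B` is `X`;
(Sperner) no element of `B` is a proper subset of another; (Density) every
infinite subset of `X` has an initial segment in `B`. -/
def IsBarrierOn (B : Set (Finset ℕ)) (X : Set ℕ) : Prop :=
  (⋃ s ∈ B, (s : Set ℕ)) = X ∧
  (∀ s ∈ B, ∀ t ∈ B, ¬ s ⊂ t) ∧
  (∀ Y : Set ℕ, Y ⊆ X → Y.Infinite → ∃ s ∈ B, IsInitSeg s Y)

lemma initSeg_comparable {s t : Finset ℕ} {W : Set ℕ}
    (hs : IsInitSeg s W) (ht : IsInitSeg t W) : s ⊆ t ∨ t ⊆ s := by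
  by_contra h
  push_neg at h
  obtain ⟨h1, h2⟩ := h
  obtain ⟨a, ha, hat⟩ := Finset.not_subset.mp h1
  obtain ⟨b, hb, hbs⟩ := Finset.not_subset.mp h2
  have hab : a < b := hs.2 b (ht.1 hb) hbs a ha
  have hba : b < a := ht.2 a (hs.1 ha) hat b hb
  omega

lemma empty_not_mem_barrier {B : Set (Finset ℕ)} {X : Set ℕ} (hX : X.Infinite)
    (hB : IsBarrierOn B X) : ∅ ∉ B := by
  intro h
  obtain ⟨x, hx⟩ := hX.nonempty
  rw [← hB.1] at hx
  simp only [Set.mem_iUnion] at hx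
  obtain ⟨s, hsB, hxs⟩ := hx
  have : ¬ (∅ : Finset ℕ) ⊂ s := hB.2.1 ∅ h s hsB
  have hse : s = ∅ := by
    by_contra hne
    exact this (Finset.empty_ssubset.mpr (Finset.nonempty_iff_ne_empty.mpr hne))
  simp [hse] at hxs

theorem subbarrier_iff (B : Set (Finset ℕ)) (X : Set ℕ) (hX : X.Infinite)
    (hB : IsBarrierOn B X) (B' : Set (Finset ℕ)) (hB' : B' ⊆ B) :
    (∃ Z : Set ℕ, Z.Infinite ∧ IsBarrierOn B' Z) ↔
      ∃ Y : Set ℕ, Y ⊆ X ∧ Y.Infinite ∧ B' = {s ∈ B | ↑s ⊆ Y} := by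
  constructor
  · rintro ⟨Z, hZinf, hbase, hsp, hdens⟩
    have hsubZ : ∀ s ∈ B', (s : Set ℕ) ⊆ Z := by
      intro s hs
      rw [← hbase]
      exact Set.subset_biUnion_of_mem hs
    refine ⟨Z, ?_, hZinf, ?_⟩
    · -- Z ⊆ X
      rw [← hB.1, ← hbase]
      exact Set.biUnion_mono hB' (fun s _ => subset_rfl)
    · ext s
      simp only [Set.mem_setOf_eq]
      constructor
      · intro hs
        exact ⟨hB' hs, hsubZ s hs⟩
      · rintro ⟨hsB, hsZ⟩
        -- consider W = s ∪ {z ∈ Z | z > all of s}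
        set W : Set ℕ := ↑s ∪ {z ∈ Z | ∀ x ∈ s, x < z} with hW
        have hWZ : W ⊆ Z := by
          rintro z (hz | hz)
          · exact hsZ hz
          · exact hz.1
        have hWinf : W.Infinite := by
          have : (Z \ Set.Iic (s.sup id)).Infinite := hZinf.diff (Set.finite_Iic _)
          refine this.mono ?_
          rintro z ⟨hzZ, hz⟩
          right
          refine ⟨hzZ, fun x hx => ?_⟩
          simp only [Set.mem_Iic, not_le] at hz
          exact lt_of_le_of_lt (Finset.le_sup (f := id) hx) hz
        obtain ⟨t, htB', hts⟩ := hdens W hWZ hWinf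
        have hsW : IsInitSeg s W := by
          constructor
          · exact Set.subset_union_left
          · rintro y (hy | hy) hys x hx
            · exact absurd hy hys
            · exact hy.2 x hx
        have hcomp := initSeg_comparable hsW hts
        have hst : s = t := by
          rcases hcomp with h | h
          · by_contra hne
            exact hB.2.1 s hsB t (hB' htB') (Finset.ssubset_iff_subset_ne.mpr ⟨h, hne⟩)
          · by_contra hne
            exact hB.2.1 t (hB' htB') s hsB
              (Finset.ssubset_iff_subset_ne.mpr ⟨h, fun h' => hne h'.symm⟩)
        rw [hst]; exact htB'
  · rintro ⟨Y, hYX, hYinf, rfl⟩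
    set Z : Set ℕ := ⋃ s ∈ {s ∈ B | (s : Set ℕ) ⊆ Y}, (s : Set ℕ) with hZ
    have hZY : Z ⊆ Y := by
      intro z hz
      simp only [hZ, Set.mem_iUnion, Set.mem_setOf_eq] at hz
      obtain ⟨s, ⟨_, hsY⟩, hzs⟩ := hz
      exact hsY hzs
    have hemp : ∅ ∉ B := empty_not_mem_barrier hX hB
    have hZinf : Z.Infinite := by
      apply Set.infinite_of_not_bddAbove
      rintro ⟨n, hn⟩
      have hY' : (Y \ Set.Iic n).Infinite := hYinf.diff (Set.finite_Iic n)
      obtain ⟨s, hsB, hsY'⟩ := hB.2.2 (Y \ Set.Iic n) (fun y hy => hYX hy.1) hY'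
      have hsne : s.Nonempty := Finset.nonempty_iff_ne_empty.mpr (fun h => hemp (h ▸ hsB))
      obtain ⟨x, hx⟩ := hsne
      have hxY' : x ∈ Y \ Set.Iic n := hsY'.1 hx
      have hxZ : x ∈ Z := by
        simp only [hZ, Set.mem_iUnion, Set.mem_setOf_eq]
        exact ⟨s, ⟨hsB, fun y hy => (hsY'.1 hy).1⟩, hx⟩
      have := hn hxZ
      simp only [Set.mem_diff, Set.mem_Iic, not_le] at hxY'
      exact absurd this (not_le.mpr hxY'.2)
    refine ⟨Z, hZinf, rfl, ?_, ?_⟩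
    · intro s hs t ht
      exact hB.2.1 s hs.1 t ht.1
    · intro W hWZ hWinf
      obtain ⟨s, hsB, hsW⟩ := hB.2.2 W (fun w hw => hYX (hZY (hWZ hw))) hWinf
      exact ⟨s, ⟨hsB, fun x hx => hZY (hWZ (hsW.1 hx))⟩, hsW⟩
end

section
/- Let B be a barrier with base X ⊆ ℕ, let s = {s_0 < s_1 < ... < s_n} ∈ B, fix i ∈ {-1, 0, ..., n-1} (with the convention s_{-1} = -1), and let k ∈ X with s_i < k < s_{i+1}. Then there exists a unique element of B of the form {s_0, ..., s_i, k, s_{i+1}, ..., s_j} with j < n (the k-variant s[k] of s). -/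
/-- Two downward-closed (in `s`) sets are comparable. -/
lemma downclosed_comparable (s u₁ u₂ : Finset ℕ)
    (h₁ : ∀ x ∈ u₁, ∀ y ∈ s, y ≤ x → y ∈ u₁) (h₂ : ∀ x ∈ u₂, ∀ y ∈ s, y ≤ x → y ∈ u₂)
    (hu₁ : u₁ ⊆ s) (hu₂ : u₂ ⊆ s) : u₁ ⊆ u₂ ∨ u₂ ⊆ u₁ := by
  by_contra h
  push_neg at h
  obtain ⟨x, hx, hx2⟩ := Finset.not_subset.mp h.1
  obtain ⟨y, hy, hy2⟩ := Finset.not_subset.mp h.2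
  rcases le_total x y with hxy | hxy
  · exact hx2 (h₂ y hy x (hu₁ hx) hxy)
  · exact hy2 (h₁ x hx y (hu₂ hy) hxy)

/-- Existence and uniqueness of the `k`-variant `s[k]`: the unique element of `B`
of the form `{s_0, …, s_i, k, s_{i+1}, …, s_j}` with `j < n`, described set-theoretically
as `insert k u` where `u` is a proper initial part of `s` containing all elements of `s`
below `k`. -/
theorem variant_exists_unique (B : Set (Finset ℕ)) (X : Set ℕ) (hX : X.Infinite)
    (hB : IsBarrierOn B X) (s : Finset ℕ) (hs : s ∈ B)
    (k : ℕ) (hkX : k ∈ X) (hks : k ∉ s) (hlt : ∃ x ∈ s, k < x) :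
    ∃! t : Finset ℕ, t ∈ B ∧
      ∃ u : Finset ℕ, u ⊂ s ∧ (∀ x ∈ u, ∀ y ∈ s, y ≤ x → y ∈ u) ∧
        (∀ x ∈ s, x < k → x ∈ u) ∧ t = insert k u := by
  obtain ⟨hbase, hsp, hdense⟩ := hB
  have hsX : ↑s ⊆ X := by
    intro x hx
    rw [← hbase]
    exact Set.mem_biUnion hs hx
  obtain ⟨m, hm, hkm⟩ := hlt
  have hne : s.Nonempty := ⟨m, hm⟩
  set M := s.max' hne with hM
  set Y : Set ℕ := ↑s ∪ ({k} ∪ {x | x ∈ X ∧ M < x}) with hY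
  have hYX : Y ⊆ X := by
    rintro x (hx | hx | hx)
    · exact hsX hx
    · simp only [Set.mem_singleton_iff] at hx; subst hx; exact hkX
    · exact hx.1
  have hYinf : Y.Infinite := by
    apply Set.Infinite.mono (s := X \ Set.Iic M)
    · intro x hx
      exact Or.inr (Or.inr ⟨hx.1, by simpa using hx.2⟩)
    · exact hX.diff (Set.finite_Iic M)
  obtain ⟨t, htB, htY, hseg⟩ := hdense Y hYX hYinf
  have hkY : k ∈ Y := Or.inr (Or.inl rfl)
  -- k ∈ t
  have hkt : k ∈ t := by
    by_contra hkt
    have hlt' : ∀ x ∈ t, x < k := fun x hx => hseg k hkY hkt x hx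
    have hts : t ⊆ s := by
      intro x hx
      rcases htY hx with h | h | h
      · exact h
      · simp only [Set.mem_singleton_iff] at h; exact absurd (h ▸ hx) hkt
      · exact absurd (hlt' x hx)
          (not_lt.mpr ((hkm.trans_le (s.le_max' m hm)).trans h.2).le)
    have hns : ¬ s ⊆ t := fun hst => absurd (hlt' m (hst hm)) (not_lt.mpr hkm.le)
    exact hsp t htB s hs ⟨hts, hns⟩
  -- t ⊆ s ∪ {k}
  have htsk : ∀ x ∈ t, x ∈ s ∨ x = k := by
    intro x hx
    rcases htY hx with h | h | h
    · exact Or.inl h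
    · exact Or.inr h
    · exfalso
      -- x > M, so s ⊆ t, so s ⊂ t, contradicting Sperner
      have hst : s ⊆ t := by
        intro y hy
        by_contra hyt
        have := hseg y (Or.inl hy) hyt x hx
        exact absurd (s.le_max' y hy) (not_le.mpr (h.2.trans this))
      exact hsp s hs t htB ⟨hst, fun hts => hks (hts hkt)⟩
  refine ⟨t, ⟨htB, t.erase k, ?_, ?_, ?_, (Finset.insert_erase hkt).symm⟩, ?_⟩
  · -- t.erase k ⊂ s
    constructor
    · intro x hx
      rcases htsk x (Finset.mem_of_mem_erase hx) with h | h
      · exact h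
      · exact absurd h (Finset.ne_of_mem_erase hx)
    · intro hst
      exact hsp s hs t htB ⟨fun y hy => Finset.mem_of_mem_erase (hst hy),
        fun hts => hks (hts hkt)⟩
  · -- downward closed
    intro x hx y hy hyx
    have hxt := Finset.mem_of_mem_erase hx
    by_cases hyt : y ∈ t
    · exact Finset.mem_erase.mpr ⟨fun h => hks (h ▸ hy), hyt⟩
    · exact absurd (hseg y (Or.inl hy) hyt x hxt) (not_lt.mpr hyx)
  · -- all elements of s below k
    intro x hx hxk
    by_cases hxt : x ∈ t
    · exact Finset.mem_erase.mpr ⟨hxk.ne, hxt⟩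
    · exact absurd (hseg x (Or.inl hx) hxt k hkt) (not_lt.mpr hxk.le)
  · -- uniqueness
    rintro t₁ ⟨ht₁B, u₁, hu₁s, hdc₁, hbel₁, rfl⟩
    have hprop : ∀ u : Finset ℕ, u ⊂ s → (∀ x ∈ u, ∀ y ∈ s, y ≤ x → y ∈ u) →
        (∀ x ∈ s, x < k → x ∈ u) → insert k u ∈ B → insert k u = t := by
      intro u hus hdc hbel huB
      obtain ⟨u₂, hu₂s, hdc₂, hbel₂, ht₂⟩ :
          ∃ u₂ : Finset ℕ, u₂ ⊂ s ∧ (∀ x ∈ u₂, ∀ y ∈ s, y ≤ x → y ∈ u₂) ∧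
            (∀ x ∈ s, x < k → x ∈ u₂) ∧ t = insert k u₂ := by
        refine ⟨t.erase k, ⟨?_, ?_⟩, ?_, ?_, (Finset.insert_erase hkt).symm⟩
        · intro x hx
          rcases htsk x (Finset.mem_of_mem_erase hx) with h | h
          · exact h
          · exact absurd h (Finset.ne_of_mem_erase hx)
        · intro hst
          exact hsp s hs t htB ⟨fun y hy => Finset.mem_of_mem_erase (hst hy),
            fun hts => hks (hts hkt)⟩
        · intro x hx y hy hyx
          have hxt := Finset.mem_of_mem_erase hx
          by_cases hyt : y ∈ t
          · exact Finset.mem_erase.mpr ⟨fun h => hks (h ▸ hy), hyt⟩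
          · exact absurd (hseg y (Or.inl hy) hyt x hxt) (not_lt.mpr hyx)
        · intro x hx hxk
          by_cases hxt : x ∈ t
          · exact Finset.mem_erase.mpr ⟨hxk.ne, hxt⟩
          · exact absurd (hseg x (Or.inl hx) hxt k hkt) (not_lt.mpr hxk.le)
      rcases downclosed_comparable s u u₂ hdc hdc₂ hus.1 hu₂s.1 with h | h
      · have hsub : insert k u ⊆ t := ht₂ ▸ Finset.insert_subset_insert k h
        rcases eq_or_ne (insert k u) t with he | hne'
        · exact he
        · exact absurd ⟨hsub, fun hts => hne' (Finset.Subset.antisymm hsub hts)⟩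
            (hsp _ huB t htB)
      · have hsub : t ⊆ insert k u := ht₂ ▸ Finset.insert_subset_insert k h
        rcases eq_or_ne (insert k u) t with he | hne'
        · exact he
        · exact absurd ⟨hsub, fun hts => hne' (Finset.Subset.antisymm hts hsub)⟩
            (hsp t htB _ huB)
    exact hprop u₁ hu₁s hdc₁ hbel₁ ht₁B
end

section
/- Let B be a barrier, let s ∈ B with increasing enumeration (s_0, ..., s_n), and let k be an element of the base of B with s_{n-1} < k < s_n. Then (s_0, ..., s_{n-1}, k) ∈ B. -/
theorem variant_last (B : Set (Finset ℕ)) (X : Set ℕ) (hX : X.Infinite)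
    (hB : IsBarrierOn B X) (s : Finset ℕ) (hs : s ∈ B) (hne : s.Nonempty)
    (k : ℕ) (hkX : k ∈ X) (hk : k < s.max' hne)
    (hgt : ∀ x ∈ s, x < s.max' hne → x < k) :
    insert k (s.erase (s.max' hne)) ∈ B := by
  obtain ⟨hbase, hsperner, hdense⟩ := hB
  set m := s.max' hne with hm
  have hmS : m ∈ s := s.max'_mem hne
  have hsX : ↑s ⊆ X := by
    rw [← hbase]; exact fun x hx => Set.mem_biUnion hs hx
  have hks : k ∉ s := fun h => absurd (hgt k h hk) (lt_irrefl k)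
  set Y : Set ℕ := ↑s ∪ ({k} ∪ {x ∈ X | m < x}) with hY
  have hYX : Y ⊆ X := by
    rintro x (hx | hx | hx)
    · exact hsX hx
    · simp only [Set.mem_singleton_iff] at hx; subst hx; exact hkX
    · exact hx.1
  have htail : {x ∈ X | m < x}.Infinite := by
    have h1 : X \ Set.Iic m ⊆ {x ∈ X | m < x} := by
      rintro x ⟨hx1, hx2⟩
      exact ⟨hx1, by simpa using hx2⟩
    exact (hX.diff (Set.finite_Iic m)).mono h1
  have hYinf : Y.Infinite := htail.mono (fun x hx => Or.inr (Or.inr hx))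
  obtain ⟨u, huB, huY, hinit⟩ := hdense Y hYX hYinf
  -- k ∈ Y
  have hkY : k ∈ Y := Or.inr (Or.inl rfl)
  -- k ∈ u
  have hku : k ∈ u := by
    by_contra hku
    have hlt : ∀ x ∈ u, x < k := fun x hx => hinit k hkY hku x hx
    have husub : u ⊆ s.erase m := by
      intro x hx
      have hxY : (x : ℕ) ∈ Y := huY hx
      have hxk : x < k := hlt x hx
      rcases hxY with hxs | hxk' | hxt
      · exact Finset.mem_erase.mpr ⟨fun h => absurd (h ▸ hxk) (not_lt.mpr hk.le), hxs⟩
      · simp only [Set.mem_singleton_iff] at hxk'; omega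
      · exact absurd hxt.2 (by omega)
    exact hsperner u huB s hs
      (Finset.ssubset_of_subset_of_ssubset husub (Finset.erase_ssubset hmS))
  have hem : ∀ x ∈ s.erase m, x ∈ u := by
    intro x hx
    obtain ⟨hxm, hxs⟩ := Finset.mem_erase.mp hx
    by_contra hxu
    have hxY : (x : ℕ) ∈ Y := Or.inl hxs
    have : k < x := hinit x hxY hxu k hku
    have hxk : x < k := hgt x hxs (lt_of_le_of_ne (s.le_max' x hxs) hxm)
    omega
  -- u has no element ≥ m
  have hnob : ∀ y ∈ u, y < m := by
    by_contra hbig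
    push_neg at hbig
    obtain ⟨y, hyu, hym⟩ := hbig
    have hmu : m ∈ u := by
      by_contra hmu
      have : y < m := hinit m (Or.inl hmS) hmu y hyu
      omega
    have hsu : s ⊆ u := by
      intro x hxs
      by_cases hxm : x = m
      · exact hxm ▸ hmu
      · exact hem x (Finset.mem_erase.mpr ⟨hxm, hxs⟩)
    exact hsperner s hs u huB ⟨hsu, fun h => hks (h hku)⟩
  -- conclude u = insert k (s.erase m)
  have : u = insert k (s.erase m) := by
    ext x
    constructor
    · intro hxu
      rcases huY hxu with hxs | hxk | hxt
      · have hxm : x ≠ m := fun h => absurd (h ▸ hnob x hxu) (lt_irrefl m)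
        exact Finset.mem_insert.mpr (Or.inr (Finset.mem_erase.mpr ⟨hxm, hxs⟩))
      · simp only [Set.mem_singleton_iff] at hxk
        exact Finset.mem_insert.mpr (Or.inl hxk)
      · exact absurd (hnob x hxu) (not_lt.mpr hxt.2.le)
    · intro hx
      rcases Finset.mem_insert.mp hx with h | h
      · exact h ▸ hku
      · exact hem x h
  rw [← this]; exact huB
end

section
/- Let B be a barrier with base X ⊆ ℕ. Define B⁺ = { s⁺ ∪ {m} : s ∈ B, m ∈ X⁺, m > max(s) + 1 }, where s⁺ = { x+1 : x ∈ s } and X⁺ = { x+1 : x ∈ X }. Then B⁺ is a barrier with base X⁺. -/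
theorem barrier_plus (B : Set (Finset ℕ)) (X : Set ℕ) (hX : X.Infinite)
    (hB : IsBarrierOn B X) :
    IsBarrierOn
      {t : Finset ℕ | ∃ s ∈ B, ∃ x ∈ X, (∀ y ∈ s, y < x) ∧
        t = insert (x + 1) (s.image (· + 1))}
      ((fun x => x + 1) '' X) := by
  obtain ⟨hbase, hsperner, hdense⟩ := hB
  have hinj : Function.Injective (· + 1 : ℕ → ℕ) := add_left_injective 1
  refine ⟨?_, ?_, ?_⟩
  · ext n
    simp only [Set.mem_iUnion, Set.mem_setOf_eq, Set.mem_image]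
    constructor
    · rintro ⟨t, ⟨s, hs, x, hx, hlt, rfl⟩, hn⟩
      simp only [Finset.coe_insert, Set.mem_insert_iff, Finset.coe_image, Set.mem_image,
        Finset.mem_coe] at hn
      rcases hn with rfl | ⟨y, hy, rfl⟩
      · exact ⟨x, hx, rfl⟩
      · have : (y : ℕ) ∈ X := by
          rw [← hbase]; exact Set.mem_iUnion₂.2 ⟨s, hs, hy⟩
        exact ⟨y, this, rfl⟩
    · rintro ⟨x, hx, rfl⟩
      have hx' : x ∈ ⋃ s ∈ B, (s : Set ℕ) := hbase ▸ hx
      obtain ⟨s, hs, hxs⟩ := Set.mem_iUnion₂.1 hx'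
      obtain ⟨x', hx'X, hgt⟩ := hX.exists_gt (s.sup id)
      have hltall : ∀ y ∈ s, y < x' := fun y hy =>
        lt_of_le_of_lt (Finset.le_sup (f := id) hy) hgt
      refine ⟨insert (x' + 1) (s.image (· + 1)), ⟨s, hs, x', hx'X, hltall, rfl⟩, ?_⟩
      simp only [Finset.coe_insert, Set.mem_insert_iff, Finset.coe_image, Set.mem_image,
        Finset.mem_coe]
      exact Or.inr ⟨x, hxs, rfl⟩
  · rintro t1 ⟨s1, hs1, x1, hx1, hlt1, rfl⟩ t2 ⟨s2, hs2, x2, hx2, hlt2, rfl⟩ hss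
    have e1 : insert (x1 + 1) (Finset.image (fun x => x + 1) s1)
        = Finset.image (fun x => x + 1) (insert x1 s1) := by simp
    have e2 : insert (x2 + 1) (Finset.image (fun x => x + 1) s2)
        = Finset.image (fun x => x + 1) (insert x2 s2) := by simp
    rw [e1, e2, Finset.image_ssubset_image hinj] at hss
    have hx1s1 : x1 ∉ s1 := fun h => lt_irrefl x1 (hlt1 x1 h)
    have hx1mem : x1 ∈ insert x2 s2 := hss.subset (Finset.mem_insert_self _ _)
    have hx1le : x1 ≤ x2 := by
      rcases Finset.mem_insert.1 hx1mem with h | h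
      · omega
      · exact le_of_lt (hlt2 x1 h)
    have hsub : s1 ⊆ s2 := by
      intro y hy
      have hy2 : y ∈ insert x2 s2 := hss.subset (Finset.mem_insert_of_mem hy)
      rcases Finset.mem_insert.1 hy2 with h | h
      · exact absurd (hlt1 y hy) (by omega)
      · exact h
    refine hsperner s1 hs1 s2 hs2 ((Finset.ssubset_iff_of_subset hsub).2 ?_)
    by_cases hxx : x1 = x2
    · obtain ⟨z, hz2, hz1⟩ := Finset.exists_of_ssubset hss
      refine ⟨z, ?_, fun h => hz1 (Finset.mem_insert_of_mem h)⟩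
      rcases Finset.mem_insert.1 hz2 with h | h
      · exact absurd (h ▸ hxx ▸ Finset.mem_insert_self x1 s1) hz1
      · exact h
    · have : x1 ∈ s2 := by
        rcases Finset.mem_insert.1 hx1mem with h | h
        · exact absurd h hxx
        · exact h
      exact ⟨x1, this, hx1s1⟩
  · intro Y hY hYinf
    set Y0 : Set ℕ := {x | x ∈ X ∧ x + 1 ∈ Y} with hY0def
    have hY0X : Y0 ⊆ X := fun x hx => hx.1
    have hYeq : Y = (· + 1) '' Y0 := by
      ext y
      constructor
      · intro hy
        obtain ⟨x, hxX, rfl⟩ := hY hy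
        exact ⟨x, ⟨hxX, hy⟩, rfl⟩
      · rintro ⟨x, hx, rfl⟩; exact hx.2
    have hY0inf : Y0.Infinite := fun hfin => hYinf (hYeq ▸ hfin.image _)
    obtain ⟨s, hs, hsub, hseg⟩ := hdense Y0 hY0X hY0inf
    have hne : (Y0 \ ↑s).Nonempty := (hY0inf.diff s.finite_toSet).nonempty
    set x := sInf (Y0 \ ↑s) with hxdef
    have hxmem : x ∈ Y0 \ ↑s := Nat.sInf_mem hne
    have hxns : x ∉ s := fun h => hxmem.2 (Finset.mem_coe.2 h)
    have hxlt : ∀ y ∈ s, y < x := fun y hy => hseg x hxmem.1 hxns y hy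
    refine ⟨insert (x + 1) (s.image (· + 1)), ⟨s, hs, x, hxmem.1.1, hxlt, rfl⟩, ?_, ?_⟩
    · intro z hz
      simp only [Finset.coe_insert, Set.mem_insert_iff, Finset.coe_image, Set.mem_image,
        Finset.mem_coe] at hz
      rcases hz with rfl | ⟨y, hy, rfl⟩
      · exact hxmem.1.2
      · exact (hsub hy).2
    · intro y hy hyt z hz
      obtain ⟨w, hwX, rfl⟩ := hY hy
      have hwY0 : w ∈ Y0 := ⟨hwX, hy⟩
      have hws : w ∉ s := fun h =>
        hyt (Finset.mem_insert_of_mem (Finset.mem_image.2 ⟨w, h, rfl⟩))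
      have hwx : w ≠ x := fun h => hyt (h ▸ Finset.mem_insert_self _ _)
      have hxw : x < w :=
        lt_of_le_of_ne (Nat.sInf_le ⟨hwY0, fun h => hws (Finset.mem_coe.1 h)⟩) (Ne.symm hwx)
      beta_reduce
      rcases Finset.mem_insert.1 hz with rfl | h
      · omega
      · obtain ⟨u, hu, rfl⟩ := Finset.mem_image.1 h
        have := hxlt u hu
        omega
end

section
/- If B and B' are barriers on the same infinite base X ⊆ ℕ, then B * B' = { s ∪ t : s ∈ B, t ∈ B', max(s) < min(t) } is a barrier on X. -/
/-- Every member of a barrier on an infinite set is nonempty. -/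
lemma barrier_mem_nonempty {B : Set (Finset ℕ)} {X : Set ℕ} (hX : X.Infinite)
    (hB : IsBarrierOn B X) : ∀ t ∈ B, t.Nonempty := by
  obtain ⟨hbase, hsp, _⟩ := hB
  intro t ht
  rw [Finset.nonempty_iff_ne_empty]
  rintro rfl
  obtain ⟨x, hx⟩ := hX.nonempty
  rw [← hbase] at hx
  obtain ⟨s, hs, hxs⟩ := Set.mem_iUnion₂.mp hx
  exact hsp ∅ ht s hs ⟨Finset.empty_subset s, fun h => by simpa using h hxs⟩

/-- If a product member is contained in another product member, they are equal. -/
lemma star_subset_eq {B B' : Set (Finset ℕ)}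
    (hBsp : ∀ s ∈ B, ∀ t ∈ B, ¬ s ⊂ t)
    (hB'sp : ∀ s ∈ B', ∀ t ∈ B', ¬ s ⊂ t)
    {s s' t t' : Finset ℕ} (hs : s ∈ B) (hs' : s' ∈ B) (ht : t ∈ B') (ht' : t' ∈ B')
    (hlt : ∀ x ∈ s, ∀ y ∈ t, x < y) (hlt' : ∀ x ∈ s', ∀ y ∈ t', x < y)
    (hsub : s ∪ t ⊆ s' ∪ t') : s ∪ t = s' ∪ t' := by
  have hss' : s = s' := by
    by_contra hne
    have hΔ : ((s \ s') ∪ (s' \ s)).Nonempty := by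
      rw [Finset.nonempty_iff_ne_empty]
      intro h
      rw [Finset.union_eq_empty, Finset.sdiff_eq_empty_iff_subset,
        Finset.sdiff_eq_empty_iff_subset] at h
      exact hne (Finset.Subset.antisymm h.1 h.2)
    set x := ((s \ s') ∪ (s' \ s)).min' hΔ with hxdef
    have hxmem := Finset.min'_mem _ hΔ
    have hxmin : ∀ z ∈ (s \ s') ∪ (s' \ s), x ≤ z := fun z hz => Finset.min'_le _ z hz
    rw [Finset.mem_union, Finset.mem_sdiff, Finset.mem_sdiff] at hxmem
    rcases hxmem with ⟨hxs, hxns'⟩ | ⟨hxs', hxns⟩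
    · -- x ∈ s \ s' : then x ∈ t', so s' ⊊ s, contradiction
      have hxt' : x ∈ t' := by
        have h := hsub (Finset.mem_union_left _ hxs)
        rw [Finset.mem_union] at h
        tauto
      have hs'x : ∀ z ∈ s', z < x := fun z hz => hlt' z hz x hxt'
      have hsub2 : s' ⊆ s := by
        intro z hz
        by_contra hzn
        have hle : x ≤ z := hxmin z (by
          rw [Finset.mem_union, Finset.mem_sdiff, Finset.mem_sdiff]; tauto)
        exact absurd (hs'x z hz) (not_lt.mpr hle)
      exact hBsp s' hs' s hs ⟨hsub2, fun h => hxns' (h hxs)⟩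
    · -- x ∈ s' \ s : then s ⊆ s', contradiction
      have hsub2 : s ⊆ s' := by
        intro y hy
        by_contra hyn
        have hxy : x < y := by
          have hle : x ≤ y := hxmin y (by
            rw [Finset.mem_union, Finset.mem_sdiff, Finset.mem_sdiff]; tauto)
          rcases hle.lt_or_eq with h | h
          · exact h
          · exact absurd hy (by rw [← h]; exact hxns)
        have hyt' : y ∈ t' := by
          have h := hsub (Finset.mem_union_left _ hy)
          rw [Finset.mem_union] at h
          tauto
        have htt' : t ⊆ t' := by
          intro w hw
          have hw' := hsub (Finset.mem_union_right _ hw)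
          rw [Finset.mem_union] at hw'
          rcases hw' with h | h
          · exact absurd (hlt' w h y hyt') (not_lt.mpr (hlt y hy w hw).le)
          · exact h
        have hyt : y ∉ t := fun h => lt_irrefl y (hlt y hy y h)
        exact hB'sp t ht t' ht' ⟨htt', fun h => hyt (h hyt')⟩
      exact hBsp s hs s' hs' ⟨hsub2, fun h => hxns (h hxs')⟩
  subst hss'
  have htt' : t ⊆ t' := by
    intro w hw
    have hw' := hsub (Finset.mem_union_right _ hw)
    rw [Finset.mem_union] at hw'
    rcases hw' with h | h
    · exact absurd (hlt w h w hw) (lt_irrefl w)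
    · exact h
  have heq : t = t' := by
    by_contra hne
    exact hB'sp t ht t' ht' (Finset.ssubset_iff_subset_ne.mpr ⟨htt', hne⟩)
  rw [heq]

theorem barrier_star (B B' : Set (Finset ℕ)) (X : Set ℕ) (hX : X.Infinite)
    (hB : IsBarrierOn B X) (hB' : IsBarrierOn B' X) :
    IsBarrierOn
      {u : Finset ℕ | ∃ s ∈ B, ∃ t ∈ B', (∀ x ∈ s, ∀ y ∈ t, x < y) ∧ u = s ∪ t}
      X := by
  have hne' := barrier_mem_nonempty hX hB'
  obtain ⟨hBbase, hBsp, hBden⟩ := hB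
  obtain ⟨hB'base, hB'sp, hB'den⟩ := hB'
  -- Density
  have hden : ∀ Y : Set ℕ, Y ⊆ X → Y.Infinite →
      ∃ u ∈ {u : Finset ℕ | ∃ s ∈ B, ∃ t ∈ B', (∀ x ∈ s, ∀ y ∈ t, x < y) ∧ u = s ∪ t},
        IsInitSeg u Y := by
    intro Y hYX hYinf
    obtain ⟨s, hsB, hsY, hsInit⟩ := hBden Y hYX hYinf
    have hY' : (Y \ ↑s).Infinite := hYinf.diff s.finite_toSet
    obtain ⟨t, htB, htY', htInit⟩ := hB'den (Y \ ↑s) (fun y hy => hYX hy.1) hY'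
    refine ⟨s ∪ t, ⟨s, hsB, t, htB, ?_, rfl⟩, ?_, ?_⟩
    · intro x hx y hy
      have hyY' : (y : ℕ) ∈ Y \ ↑s := htY' hy
      exact hsInit y hyY'.1 (by simpa using hyY'.2) x hx
    · intro z hz
      rw [Finset.coe_union, Set.mem_union] at hz
      rcases hz with h | h
      · exact hsY h
      · exact (htY' h).1
    · intro y hyY hyu x hx
      have hys : y ∉ s := fun h => hyu (Finset.mem_union_left _ h)
      have hyt : y ∉ t := fun h => hyu (Finset.mem_union_right _ h)
      rcases Finset.mem_union.mp hx with h | h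
      · exact hsInit y hyY hys x h
      · exact htInit y ⟨hyY, by simpa using hys⟩ hyt x h
  refine ⟨?_, ?_, hden⟩
  · -- Base
    apply Set.Subset.antisymm
    · intro x hx
      obtain ⟨u, hu, hxu⟩ := Set.mem_iUnion₂.mp hx
      obtain ⟨s, hsB, t, htB, _, rfl⟩ := hu
      rcases Finset.mem_union.mp hxu with h | h
      · rw [← hBbase]; exact Set.mem_iUnion₂.mpr ⟨s, hsB, h⟩
      · rw [← hB'base]; exact Set.mem_iUnion₂.mpr ⟨t, htB, h⟩
    · intro x hxX
      have hYinf : (X \ Set.Iio x).Infinite := hX.diff (Set.finite_Iio x)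
      have hYX : X \ Set.Iio x ⊆ X := Set.diff_subset
      obtain ⟨u, hu, huY, huInit⟩ := hden _ hYX hYinf
      have hxY : x ∈ X \ Set.Iio x := ⟨hxX, by simp⟩
      have hxu : x ∈ u := by
        by_contra hxn
        obtain ⟨s, hsB, t, htB, _, rfl⟩ := hu
        obtain ⟨w, hw⟩ := hne' t htB
        have hwu : w ∈ s ∪ t := Finset.mem_union_right _ hw
        have hwY : (w : ℕ) ∈ X \ Set.Iio x := huY hwu
        have : w < x := huInit x hxY hxn w hwu
        exact absurd this (by simpa using hwY.2)
      exact Set.mem_iUnion₂.mpr ⟨u, hu, hxu⟩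
  · -- Sperner
    rintro u hu u' hu' ⟨hsub, hne⟩
    obtain ⟨s, hsB, t, htB, hlt, rfl⟩ := hu
    obtain ⟨s', hsB', t', htB', hlt', rfl⟩ := hu'
    exact hne (star_subset_eq hBsp hB'sp hsB hsB' htB htB' hlt hlt' hsub ▸
      Finset.Subset.refl _)
end

section
/- Barrier Ramsey theorem (Nash-Williams): Let B be a barrier on an infinite set X ⊆ ℕ and k a positive integer. For every coloring f : B → {0, ..., k-1} there exists an infinite H ⊆ X such that f is constant on B|H = { s ∈ B : s ⊆ H }. -/
namespace BRaux

/-- Combinatorial forcing: `s` accepts `M`. -/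
def Accepts (F : Set (Finset ℕ)) (s : Finset ℕ) (M : Set ℕ) : Prop :=
  ∀ Y : Set ℕ, Y.Infinite → IsInitSeg s Y → Y ⊆ ↑s ∪ M → ∃ t ∈ F, IsInitSeg t Y

/-- `s` rejects `M`: it accepts no infinite subset of `M`. -/
def Rejects (F : Set (Finset ℕ)) (s : Finset ℕ) (M : Set ℕ) : Prop :=
  ∀ M' : Set ℕ, M' ⊆ M → M'.Infinite → ¬ Accepts F s M'

/-- the part of `ℕ` above all elements of `s`. -/
def above (s : Finset ℕ) : Set ℕ := {m | ∀ x ∈ s, x < m}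

lemma above_compl_finite (s : Finset ℕ) : (above s)ᶜ.Finite := by
  apply (Set.finite_Iic (s.sup id)).subset
  intro m hm
  simp only [above, Set.mem_compl_iff, Set.mem_setOf_eq, not_forall] at hm
  obtain ⟨x, hx, hxm⟩ := hm
  exact Set.mem_Iic.mpr (le_trans (not_lt.mp hxm) (Finset.le_sup (f := id) hx))

lemma inter_above_infinite {M : Set ℕ} (hM : M.Infinite) (s : Finset ℕ) :
    (M ∩ above s).Infinite := by
  have : M ∩ above s = M \ (above s)ᶜ := by rw [Set.diff_eq, compl_compl]
  rw [this]
  exact hM.diff (above_compl_finite s)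

lemma accepts_mono {F s} {M M' : Set ℕ} (h : M' ⊆ M) (ha : Accepts F s M) :
    Accepts F s M' := fun Y hY hseg hsub =>
  ha Y hY hseg (hsub.trans (Set.union_subset_union_right _ h))

lemma accepts_of_above {F s} {M : Set ℕ} (h : Accepts F s (M ∩ above s)) :
    Accepts F s M := by
  intro Y hY hseg hsub
  apply h Y hY hseg
  intro y hy
  rcases hsub hy with hys | hyM
  · exact Or.inl hys
  · by_cases hys' : y ∈ s
    · exact Or.inl hys'
    · exact Or.inr ⟨hyM, fun x hx => hseg.2 y hy hys' x hx⟩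

lemma accepts_transfer {F s} {M N : Set ℕ} (h : M ∩ above s ⊆ N) (ha : Accepts F s N) :
    Accepts F s M :=
  accepts_of_above (accepts_mono h ha)

lemma rejects_transfer {F s} {M N : Set ℕ} (h : M ∩ above s ⊆ N) (hr : Rejects F s N) :
    Rejects F s M := by
  intro M' hM' hinf hacc
  exact hr (M' ∩ above s) ((Set.inter_subset_inter_left _ hM').trans h)
    (inter_above_infinite hinf s) (accepts_mono Set.inter_subset_left hacc)

lemma rejects_mono {F s} {M M' : Set ℕ} (h : M' ⊆ M) (hr : Rejects F s M) :
    Rejects F s M' :=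
  fun N hN hNinf => hr N (hN.trans h) hNinf

lemma accepts_of_mem {F} {s : Finset ℕ} (hs : s ∈ F) (M : Set ℕ) : Accepts F s M :=
  fun _ _ hseg _ => ⟨s, hs, hseg⟩

lemma decide_one (F : Set (Finset ℕ)) (s : Finset ℕ) (M : Set ℕ) (hM : M.Infinite) :
    ∃ N : Set ℕ, N ⊆ M ∧ N.Infinite ∧ (Accepts F s N ∨ Rejects F s N) := by
  by_cases h : Rejects F s M
  · exact ⟨M, subset_rfl, hM, Or.inr h⟩
  · unfold Rejects at h
    push_neg at h
    obtain ⟨N, hNM, hNinf, hacc⟩ := h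
    exact ⟨N, hNM, hNinf, Or.inl hacc⟩

lemma decide_fin (F : Set (Finset ℕ)) (S : Finset (Finset ℕ)) (M : Set ℕ) (hM : M.Infinite) :
    ∃ N : Set ℕ, N ⊆ M ∧ N.Infinite ∧ ∀ s ∈ S, Accepts F s N ∨ Rejects F s N := by
  classical
  induction S using Finset.induction_on with
  | empty => exact ⟨M, subset_rfl, hM, by simp⟩
  | @insert a S ha IH =>
    obtain ⟨N, hNM, hNinf, hdec⟩ := IH
    obtain ⟨N', hN'N, hN'inf, hdec'⟩ := decide_one F a N hNinf
    refine ⟨N', hN'N.trans hNM, hN'inf, fun s hs => ?_⟩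
    rcases Finset.mem_insert.mp hs with rfl | hsS
    · exact hdec'
    · rcases hdec s hsS with h | h
      · exact Or.inl (accepts_mono hN'N h)
      · exact Or.inr (rejects_mono hN'N h)


lemma step_ex (F : Set (Finset ℕ)) (M : Set ℕ) (hM : M.Infinite) :
    ∃ N : Set ℕ, N ⊆ M ∧ N.Infinite ∧ (∀ n ∈ N, sInf M < n) ∧
      ∀ s : Finset ℕ, s ⊆ Finset.range (sInf M + 1) → (Accepts F s N ∨ Rejects F s N) := by
  classical
  obtain ⟨N, hNM, hNinf, hdec⟩ := decide_fin F (Finset.range (sInf M + 1)).powerset M hM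
  have heq : N ∩ {n | sInf M < n} = N \ Set.Iic (sInf M) := by
    ext n; simp [Set.mem_Iic, not_le]
  refine ⟨N ∩ {n | sInf M < n}, Set.inter_subset_left.trans hNM, ?_,
    fun n hn => hn.2, fun s hs => ?_⟩
  · rw [heq]; exact hNinf.diff (Set.finite_Iic _)
  · rcases hdec s (Finset.mem_powerset.mpr hs) with h | h
    · exact Or.inl (accepts_mono Set.inter_subset_left h)
    · exact Or.inr (rejects_mono Set.inter_subset_left h)

noncomputable def nextSet (F : Set (Finset ℕ)) (M : Set ℕ) : Set ℕ := by
  classical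
  exact if h : M.Infinite then (step_ex F M h).choose else Set.univ

lemma nextSet_spec (F : Set (Finset ℕ)) {M : Set ℕ} (h : M.Infinite) :
    nextSet F M ⊆ M ∧ (nextSet F M).Infinite ∧ (∀ n ∈ nextSet F M, sInf M < n) ∧
      ∀ s : Finset ℕ, s ⊆ Finset.range (sInf M + 1) →
        (Accepts F s (nextSet F M) ∨ Rejects F s (nextSet F M)) := by
  rw [nextSet, dif_pos h]
  exact (step_ex F M h).choose_spec

noncomputable def Mseq (F : Set (Finset ℕ)) (M0 : Set ℕ) : ℕ → Set ℕ
  | 0 => M0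
  | i + 1 => nextSet F (Mseq F M0 i)

lemma exists_Mstar (F : Set (Finset ℕ)) (X : Set ℕ) (hX : X.Infinite) :
    ∃ M : Set ℕ, M ⊆ X ∧ M.Infinite ∧
      ∀ s : Finset ℕ, ↑s ⊆ M → (Accepts F s M ∨ Rejects F s M) := by
  classical
  obtain ⟨M0, hM0X, hM0inf, hdec0⟩ := decide_one F ∅ X hX
  have hinf : ∀ i, (Mseq F M0 i).Infinite := by
    intro i
    induction i with
    | zero => exact hM0inf
    | succ i IH => exact (nextSet_spec F IH).2.1
  have hsub : ∀ i, Mseq F M0 (i + 1) ⊆ Mseq F M0 i := fun i => (nextSet_spec F (hinf i)).1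
  have hanti : Antitone (Mseq F M0) := antitone_nat_of_succ_le hsub
  set m : ℕ → ℕ := fun i => sInf (Mseq F M0 i) with hm
  have hmem : ∀ i, m i ∈ Mseq F M0 i := fun i => Nat.sInf_mem (hinf i).nonempty
  have hlt : ∀ i, ∀ n ∈ Mseq F M0 (i + 1), m i < n := fun i => (nextSet_spec F (hinf i)).2.2.1
  have hmono : StrictMono m := strictMono_nat_of_lt_succ fun i => hlt i (m (i + 1)) (hmem (i + 1))
  have hmemj : ∀ i j, i ≤ j → m j ∈ Mseq F M0 i := fun i j hij => hanti hij (hmem j)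
  refine ⟨Set.range m, ?_, Set.infinite_range_of_injective hmono.injective, ?_⟩
  · rintro _ ⟨i, rfl⟩
    exact hM0X (hmemj 0 i (Nat.zero_le i))
  · intro s hsM
    rcases s.eq_empty_or_nonempty with rfl | hne
    · rcases hdec0 with h | h
      · refine Or.inl (accepts_transfer ?_ h)
        rintro n ⟨⟨i, rfl⟩, -⟩
        exact hmemj 0 i (Nat.zero_le i)
      · refine Or.inr (rejects_transfer ?_ h)
        rintro n ⟨⟨i, rfl⟩, -⟩
        exact hmemj 0 i (Nat.zero_le i)
    · obtain ⟨i, hi⟩ := hsM (s.max'_mem hne)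
      have hdecs := (nextSet_spec F (hinf i)).2.2.2 s (by
        intro x hx
        rw [Finset.mem_range, Nat.lt_succ_iff]
        calc x ≤ s.max' hne := s.le_max' x hx
        _ = sInf (Mseq F M0 i) := hi.symm)
      have htrans : Set.range m ∩ above s ⊆ Mseq F M0 (i + 1) := by
        rintro n ⟨⟨j, rfl⟩, hab⟩
        have h1 : m i < m j := hab (s.max' hne) (s.max'_mem hne) |>.trans_le' (le_of_eq hi)
        have h2 : i < j := hmono.lt_iff_lt.mp h1
        exact hmemj (i + 1) j h2
      rcases hdecs with h | h
      · exact Or.inl (accepts_transfer htrans h)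
      · exact Or.inr (rejects_transfer htrans h)

/-- the set of "bad" one-point extensions of a rejecting set is finite. -/
lemma bad_finite (F : Set (Finset ℕ)) (Ms : Set ℕ) (s : Finset ℕ)
    (hr : Rejects F s Ms) :
    {n | n ∈ Ms ∧ (∀ x ∈ s, x < n) ∧ Accepts F (insert n s) Ms}.Finite := by
  classical
  by_contra hinf
  refine hr {n | n ∈ Ms ∧ (∀ x ∈ s, x < n) ∧ Accepts F (insert n s) Ms}
    (fun n hn => hn.1) hinf ?_
  intro Y hYinf hseg hsub
  have hD : (Y \ ↑s).Nonempty := (hYinf.diff s.finite_toSet).nonempty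
  set n := sInf (Y \ ↑s) with hn
  have hnmem : n ∈ Y \ ↑s := Nat.sInf_mem hD
  have hnA : n ∈ {n | n ∈ Ms ∧ (∀ x ∈ s, x < n) ∧ Accepts F (insert n s) Ms} := by
    rcases hsub hnmem.1 with h | h
    · exact absurd h hnmem.2
    · exact h
  obtain ⟨hnM, hlt, hacc⟩ := hnA
  apply hacc Y hYinf
  · constructor
    · rw [Finset.coe_insert]
      exact Set.insert_subset hnmem.1 hseg.1
    · intro y hy hyns x hx
      have hys : y ∉ s := fun h => hyns (Finset.mem_insert_of_mem h)
      rcases Finset.mem_insert.mp hx with rfl | hxs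
      · have : n ≤ y := Nat.sInf_le ⟨hy, fun h => hys h⟩
        exact lt_of_le_of_ne this (fun h => hyns (by rw [← h]; exact Finset.mem_insert_self _ _))
      · exact hseg.2 y hy hys x hxs
  · intro y hy
    rcases hsub hy with h | h
    · exact Or.inl (Finset.mem_coe.mpr (Finset.mem_insert_of_mem (Finset.mem_coe.mp h)))
    · exact Or.inr h.1

lemma extend_reject (F : Set (Finset ℕ)) (Ms : Set ℕ) (hMs : Ms.Infinite)
    (hdec : ∀ s : Finset ℕ, ↑s ⊆ Ms → (Accepts F s Ms ∨ Rejects F s Ms))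
    (T : Finset ℕ) (hT : ↑T ⊆ Ms) (hrej : ∀ s ⊆ T, Rejects F s Ms) :
    ∃ n ∈ Ms, n ∉ T ∧ (∀ x ∈ T, x < n) ∧ ∀ s ⊆ insert n T, Rejects F s Ms := by
  classical
  have hBadU : (⋃ s ∈ T.powerset,
      {n | n ∈ Ms ∧ (∀ x ∈ s, x < n) ∧ Accepts F (insert n s) Ms}).Finite :=
    Set.Finite.biUnion (T.powerset).finite_toSet
      (fun s hs => bad_finite F Ms s (hrej s (Finset.mem_powerset.mp hs)))
  have hGood : (Ms \ ((⋃ s ∈ T.powerset,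
      {n | n ∈ Ms ∧ (∀ x ∈ s, x < n) ∧ Accepts F (insert n s) Ms}) ∪
      Set.Iic (T.sup id))).Infinite :=
    hMs.diff (hBadU.union (Set.finite_Iic _))
  obtain ⟨n, hnMs, hnBad⟩ := hGood.nonempty
  rw [Set.mem_union, not_or] at hnBad
  obtain ⟨hnB, hnI⟩ := hnBad
  have hnlt : ∀ x ∈ T, x < n := by
    intro x hx
    have : ¬ n ≤ T.sup id := fun h => hnI (Set.mem_Iic.mpr h)
    exact lt_of_le_of_lt (Finset.le_sup (f := id) hx) (not_le.mp this)
  refine ⟨n, hnMs, fun h => lt_irrefl n (hnlt n h), hnlt, ?_⟩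
  intro s hs
  by_cases hns : n ∈ s
  · have hsT : s.erase n ⊆ T := by
      intro x hx
      rcases Finset.mem_insert.mp (hs (Finset.mem_of_mem_erase hx)) with rfl | h
      · exact absurd rfl (Finset.ne_of_mem_erase hx)
      · exact h
    have hnotacc : ¬ Accepts F (insert n (s.erase n)) Ms := by
      intro hacc
      exact hnB (Set.mem_biUnion (Finset.mem_powerset.mpr hsT)
        ⟨hnMs, fun x hx => hnlt x (hsT hx), hacc⟩)
    rw [Finset.insert_erase hns] at hnotacc
    have hsMs : ↑s ⊆ Ms := by
      intro x hx
      rcases Finset.mem_insert.mp (hs hx) with rfl | h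
      · exact hnMs
      · exact hT h
    rcases hdec s hsMs with h | h
    · exact absurd h hnotacc
    · exact h
  · exact hrej s (fun x hx => (Finset.mem_insert.mp (hs hx)).resolve_left
      (fun he => hns (he ▸ hx)))

lemma galvin (F : Set (Finset ℕ)) (Ms : Set ℕ) (hMs : Ms.Infinite)
    (hdec : ∀ s : Finset ℕ, ↑s ⊆ Ms → (Accepts F s Ms ∨ Rejects F s Ms))
    (h0 : Rejects F ∅ Ms) :
    ∃ H : Set ℕ, H ⊆ Ms ∧ H.Infinite ∧
      ∀ s : Finset ℕ, ↑s ⊆ H → Rejects F s Ms := by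
  classical
  set P : Finset ℕ → Prop := fun T => ↑T ⊆ Ms ∧ ∀ s ⊆ T, Rejects F s Ms with hP
  have hP0 : P ∅ := ⟨by simp, fun s hs => by
    rw [Finset.subset_empty.mp hs]; exact h0⟩
  have hstep : ∀ T, P T → ∃ T', T ⊆ T' ∧ P T' ∧ T'.card = T.card + 1 := by
    intro T hT
    obtain ⟨n, hnMs, hnT, hnlt, hrej⟩ := extend_reject F Ms hMs hdec T hT.1 hT.2
    refine ⟨insert n T, Finset.subset_insert n T, ⟨?_, hrej⟩, Finset.card_insert_of_notMem hnT⟩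
    rw [Finset.coe_insert]
    exact Set.insert_subset hnMs hT.1
  choose! g hg1 hg2 hg3 using hstep
  set T : ℕ → Finset ℕ := fun i => g^[i] ∅ with hTdef
  have hTsucc : ∀ i, T (i + 1) = g (T i) := fun i => Function.iterate_succ_apply' g i ∅
  have hPT : ∀ i, P (T i) := by
    intro i
    induction i with
    | zero => exact hP0
    | succ i IH => rw [hTsucc i]; exact hg2 (T i) IH
  have hTmono : Monotone T := monotone_nat_of_le_succ fun i => by
    rw [hTsucc i]; exact hg1 (T i) (hPT i)
  have hTcard : ∀ i, (T i).card = i := by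
    intro i
    induction i with
    | zero => simp [hTdef]
    | succ i IH => rw [hTsucc i, hg3 (T i) (hPT i), IH]
  refine ⟨⋃ i, ↑(T i), ?_, ?_, ?_⟩
  · exact Set.iUnion_subset fun i => (hPT i).1
  · intro hfin
    have hsub : ↑(T (hfin.toFinset.card + 1)) ⊆ hfin.toFinset := by
      intro x hx
      rw [Set.Finite.mem_toFinset]
      exact Set.mem_iUnion.mpr ⟨_, hx⟩
    have := Finset.card_le_card (by exact_mod_cast hsub :
      T (hfin.toFinset.card + 1) ⊆ hfin.toFinset)
    rw [hTcard] at this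
    omega
  · intro s hs
    have hex : ∃ i, s ⊆ T i := by
      induction s using Finset.induction_on with
      | empty => exact ⟨0, Finset.empty_subset _⟩
      | @insert a s ha IH =>
        obtain ⟨i, hi⟩ := IH (by
          intro x hx
          exact hs (Finset.mem_insert_of_mem hx))
        obtain ⟨j, hj⟩ := Set.mem_iUnion.mp (hs (Finset.mem_insert_self a s))
        exact ⟨max i j, Finset.insert_subset (hTmono (le_max_right i j) hj)
          (hi.trans (hTmono (le_max_left i j)))⟩
    obtain ⟨i, hi⟩ := hex
    exact (hPT i).2 s hi

lemma initseg_comparable {s t : Finset ℕ} {Y : Set ℕ}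
    (hs : IsInitSeg s Y) (ht : IsInitSeg t Y) : s ⊆ t ∨ t ⊆ s := by
  by_cases h : s ⊆ t
  · exact Or.inl h
  · obtain ⟨a, ha, hat⟩ := Finset.not_subset.mp h
    refine Or.inr fun b hb => ?_
    by_contra hbs
    have h1 : a < b := hs.2 b (ht.1 hb) hbs a ha
    have h2 : b < a := ht.2 a (hs.1 ha) hat b hb
    omega

lemma empty_not_mem_barrier {B : Set (Finset ℕ)} {X : Set ℕ}
    (hB : IsBarrierOn B X) (hX : X.Infinite) : ∅ ∉ B := by
  intro h0
  obtain ⟨x, hx⟩ := hX.nonempty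
  rw [← hB.1] at hx
  obtain ⟨s, hsB, hxs⟩ := Set.mem_iUnion₂.mp hx
  exact hB.2.1 ∅ h0 s hsB (Finset.empty_ssubset.mpr ⟨x, hxs⟩)

lemma dichotomy (B B1 : Set (Finset ℕ)) (X : Set ℕ) (hX : X.Infinite)
    (hB : IsBarrierOn B X) (hB1 : B1 ⊆ B) :
    ∃ H : Set ℕ, H ⊆ X ∧ H.Infinite ∧
      ((∀ t ∈ B, ↑t ⊆ H → t ∈ B1) ∨ (∀ s ∈ B1, ¬ (↑s ⊆ H))) := by
  obtain ⟨M, hMX, hMinf, hdec⟩ := exists_Mstar B1 X hX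
  rcases hdec ∅ (by simp) with hacc | hrej
  · refine ⟨M, hMX, hMinf, Or.inl fun t htB htM => ?_⟩
    set Y : Set ℕ := ↑t ∪ (M ∩ above t) with hY
    have hYinf : Y.Infinite := (inter_above_infinite hMinf t).mono Set.subset_union_right
    have hYM : Y ⊆ M := Set.union_subset htM Set.inter_subset_left
    obtain ⟨u, huB1, huY⟩ := hacc Y hYinf
      ⟨by simp, fun y _ _ x hx => absurd hx (Finset.notMem_empty x)⟩
      (by simpa using hYM)
    have htY : IsInitSeg t Y := by
      refine ⟨Set.subset_union_left, fun y hy hyt x hx => ?_⟩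
      rcases hy with h | h
      · exact absurd (Finset.mem_coe.mp h) hyt
      · exact h.2 x hx
    have := initseg_comparable huY htY
    have hut : u = t := by
      rcases this with h | h
      · rcases eq_or_ne u t with he | hne
        · exact he
        · exact absurd (Finset.ssubset_iff_subset_ne.mpr ⟨h, hne⟩) (hB.2.1 u (hB1 huB1) t htB)
      · rcases eq_or_ne t u with he | hne
        · exact he.symm
        · exact absurd (Finset.ssubset_iff_subset_ne.mpr ⟨h, hne⟩) (hB.2.1 t htB u (hB1 huB1))
    exact hut ▸ huB1
  · obtain ⟨H, hHM, hHinf, hrej'⟩ := galvin B1 M hMinf hdec hrej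
    refine ⟨H, hHM.trans hMX, hHinf, Or.inr fun s hs hsH => ?_⟩
    exact hrej' s hsH M subset_rfl hMinf (accepts_of_mem hs M)

lemma barrier_restrict {B : Set (Finset ℕ)} {X H : Set ℕ}
    (hB : IsBarrierOn B X) (hX : X.Infinite) (hH : H ⊆ X) (hHinf : H.Infinite) :
    IsBarrierOn {s ∈ B | ↑s ⊆ H} H := by
  obtain ⟨hbase, hsp, hdens⟩ := hB
  refine ⟨?_, fun s hs t ht => hsp s hs.1 t ht.1, fun Y hY hYinf => ?_⟩
  · apply Set.Subset.antisymm
    · exact Set.iUnion₂_subset fun s hs => hs.2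
    · intro h hh
      have hYinf' : (H ∩ {m | h ≤ m}).Infinite := by
        have : H ∩ {m | h ≤ m} = H \ Set.Iio h := by
          ext n; simp [Set.mem_Iio, not_lt]
        rw [this]; exact hHinf.diff (Set.finite_Iio h)
      obtain ⟨s, hsB, hseg⟩ := hdens (H ∩ {m | h ≤ m})
        (Set.inter_subset_left.trans hH) hYinf'
      have hsH : ↑s ⊆ H := hseg.1.trans Set.inter_subset_left
      have hsne : s.Nonempty := by
        rcases s.eq_empty_or_nonempty with rfl | hne
        · exact absurd hsB (empty_not_mem_barrier ⟨hbase, hsp, hdens⟩ hX)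
        · exact hne
      have hhs : h ∈ s := by
        by_contra hhs
        obtain ⟨x, hx⟩ := hsne
        have h1 : x < h := hseg.2 h ⟨hh, le_refl h⟩ hhs x hx
        have h2 : h ≤ x := (hseg.1 hx).2
        omega
      exact Set.mem_iUnion₂.mpr ⟨s, ⟨hsB, hsH⟩, hhs⟩
  · obtain ⟨s, hsB, hseg⟩ := hdens Y (hY.trans hH) hYinf
    exact ⟨s, ⟨hsB, hseg.1.trans hY⟩, hseg⟩

lemma ramsey_nat : ∀ k : ℕ, ∀ B : Set (Finset ℕ), ∀ X : Set ℕ, X.Infinite →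
    IsBarrierOn B X → ∀ f : Finset ℕ → ℕ, (∀ s ∈ B, f s < k) →
    ∃ H : Set ℕ, H ⊆ X ∧ H.Infinite ∧
      ∀ s ∈ B, ↑s ⊆ H → ∀ t ∈ B, ↑t ⊆ H → f s = f t := by
  intro k
  induction k with
  | zero =>
    intro B X hX hB f hf
    exact ⟨X, subset_rfl, hX, fun s hs _ => absurd (hf s hs) (Nat.not_lt_zero _)⟩
  | succ k IH =>
    intro B X hX hB f hf
    obtain ⟨H, hHX, hHinf, hcase⟩ := dichotomy B {s ∈ B | f s = k} X hX hB
      (fun s hs => hs.1)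
    rcases hcase with h1 | h2
    · exact ⟨H, hHX, hHinf, fun s hs hsH t ht htH => by
        rw [(h1 s hs hsH).2, (h1 t ht htH).2]⟩
    · have hB' := barrier_restrict hB hX hHX hHinf
      obtain ⟨H', hH'H, hH'inf, hconst⟩ := IH {s ∈ B | ↑s ⊆ H} H hHinf hB' f
        (fun s hs => lt_of_le_of_ne (Nat.lt_succ_iff.mp (hf s hs.1))
          (fun he => h2 s ⟨hs.1, he⟩ hs.2))
      exact ⟨H', hH'H.trans hHX, hH'inf, fun s hs hsH' t ht htH' =>
        hconst s ⟨hs, hsH'.trans hH'H⟩ hsH' t ⟨ht, htH'.trans hH'H⟩ htH'⟩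

end BRaux

theorem barrier_ramsey (B : Set (Finset ℕ)) (X : Set ℕ) (hX : X.Infinite)
    (hB : IsBarrierOn B X) (k : ℕ) (hk : 0 < k) (f : Finset ℕ → Fin k) :
    ∃ H : Set ℕ, H ⊆ X ∧ H.Infinite ∧
      ∀ s ∈ B, ↑s ⊆ H → ∀ t ∈ B, ↑t ⊆ H → f s = f t := by
  obtain ⟨H, hHX, hHinf, hconst⟩ := BRaux.ramsey_nat k B X hX hB
    (fun s => (f s).val) (fun s _ => (f s).isLt)
  exact ⟨H, hHX, hHinf, fun s hs hsH t ht htH =>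
    Fin.ext (hconst s hs hsH t ht htH)⟩
end

section
/- Barrier free set theorem: Let B be a barrier on an infinite set X ⊆ ℕ. For every f : B → ℕ there exists an infinite H ⊆ X such that for all s ∈ B with s ⊆ H, if f(s) ∈ H then f(s) ∈ s. -/
namespace BFS

lemma tail_infinite {Z : Set ℕ} (hZ : Z.Infinite) (n : ℕ) :
    {x ∈ Z | n < x}.Infinite := by
  have h : Z \ {x | x ≤ n} = {x ∈ Z | n < x} := by
    ext x; simp [Set.mem_diff, not_le]
  rw [← h]
  exact hZ.diff (Set.finite_le_nat n)

lemma tail_subset {Z : Set ℕ} {n : ℕ} : {x ∈ Z | n < x} ⊆ Z := fun _ hx => hx.1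

lemma isInitSeg_empty (V : Set ℕ) : IsInitSeg ∅ V := by
  constructor
  · simp
  · intro y _ _ x hx; simp at hx

lemma initSeg_comparable {P Q : Finset ℕ} {V : Set ℕ}
    (hP : IsInitSeg P V) (hQ : IsInitSeg Q V) : P ⊆ Q ∨ Q ⊆ P := by
  by_contra hcon
  push_neg at hcon
  obtain ⟨p, hpP, hpQ⟩ := Finset.not_subset.mp hcon.1
  obtain ⟨q, hqQ, hqP⟩ := Finset.not_subset.mp hcon.2
  have h1 : q < p := hQ.2 p (hP.1 hpP) hpQ q hqQ
  have h2 : p < q := hP.2 q (hQ.1 hqQ) hqP p hpP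
  omega

lemma isInitSeg_insert_min {P : Finset ℕ} {V : Set ℕ} {m : ℕ}
    (hm : m ∈ V) (hmin : ∀ y ∈ V, m ≤ y) (h : IsInitSeg P (V \ {m})) :
    IsInitSeg (insert m P) V := by
  constructor
  · intro x hx
    rw [Finset.coe_insert] at hx
    rcases hx with rfl | hx
    · exact hm
    · exact (h.1 hx).1
  · intro y hy hyP x hx
    rcases Finset.mem_insert.mp hx with rfl | hx
    · have hne : y ≠ x := fun he => hyP (he ▸ Finset.mem_insert_self x P)
      exact lt_of_le_of_ne (hmin y hy) (Ne.symm hne)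
    · refine h.2 y ⟨hy, ?_⟩ (fun hyP' => hyP (Finset.mem_insert_of_mem hyP')) x hx
      intro he
      simp only [Set.mem_singleton_iff] at he
      exact hyP (he ▸ Finset.mem_insert_self m P)

/-- `N` accepts `G` (w.r.t. the family `𝓕`): every infinite subset of `N` has an
initial segment `P` with `G ∪ P ∈ 𝓕`. -/
def Accepts (𝓕 : Set (Finset ℕ)) (G : Finset ℕ) (N : Set ℕ) : Prop :=
  ∀ V : Set ℕ, V ⊆ N → V.Infinite → ∃ P : Finset ℕ, IsInitSeg P V ∧ G ∪ P ∈ 𝓕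

def Rejects (𝓕 : Set (Finset ℕ)) (G : Finset ℕ) (N : Set ℕ) : Prop :=
  ∀ N' : Set ℕ, N' ⊆ N → N'.Infinite → ¬ Accepts 𝓕 G N'

lemma accepts_mono {𝓕 : Set (Finset ℕ)} {G : Finset ℕ} {N N' : Set ℕ}
    (h : Accepts 𝓕 G N) (hsub : N' ⊆ N) : Accepts 𝓕 G N' :=
  fun V hV => h V (hV.trans hsub)

lemma rejects_mono {𝓕 : Set (Finset ℕ)} {G : Finset ℕ} {N N' : Set ℕ}
    (h : Rejects 𝓕 G N) (hsub : N' ⊆ N) : Rejects 𝓕 G N' :=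
  fun N'' h1 h2 => h N'' (h1.trans hsub) h2

lemma accepts_of_mem {𝓕 : Set (Finset ℕ)} {G : Finset ℕ} {N : Set ℕ}
    (hG : G ∈ 𝓕) : Accepts 𝓕 G N :=
  fun V _ _ => ⟨∅, isInitSeg_empty V, by simpa using hG⟩

/-- Galvin's "rejection" step: if `N` rejects `G`, then there is an infinite
`N' ⊆ N` that rejects `insert n G` for every `n ∈ N'`. -/
lemma exists_reject_insert {𝓕 : Set (Finset ℕ)} {G : Finset ℕ} {N : Set ℕ}
    (hN : N.Infinite) (hrej : Rejects 𝓕 G N) :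
    ∃ N', N' ⊆ N ∧ N'.Infinite ∧ ∀ n ∈ N', Rejects 𝓕 (insert n G) N' := by
  classical
  have stepex : ∀ Z : Set ℕ, Z.Infinite →
      ∃ Z' : Set ℕ, Z' ⊆ {x ∈ Z | sInf Z < x} ∧ Z'.Infinite ∧
        (Accepts 𝓕 (insert (sInf Z) G) Z' ∨
          ∀ A : Set ℕ, A ⊆ {x ∈ Z | sInf Z < x} → A.Infinite →
            ¬ Accepts 𝓕 (insert (sInf Z) G) A) := by
    intro Z hZ
    by_cases h : ∃ A : Set ℕ, A ⊆ {x ∈ Z | sInf Z < x} ∧ A.Infinite ∧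
        Accepts 𝓕 (insert (sInf Z) G) A
    · obtain ⟨A, h1, h2, h3⟩ := h
      exact ⟨A, h1, h2, Or.inl h3⟩
    · push_neg at h
      exact ⟨{x ∈ Z | sInf Z < x}, subset_rfl, tail_infinite hZ _, Or.inr h⟩
  let T : {Z : Set ℕ // Z ⊆ N ∧ Z.Infinite} → {Z : Set ℕ // Z ⊆ N ∧ Z.Infinite} :=
    fun Z => ⟨(stepex Z.1 Z.2.2).choose,
      ((stepex Z.1 Z.2.2).choose_spec.1.trans tail_subset).trans Z.2.1,
      (stepex Z.1 Z.2.2).choose_spec.2.1⟩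
  let S : ℕ → {Z : Set ℕ // Z ⊆ N ∧ Z.Infinite} := fun k => T^[k] ⟨N, subset_rfl, hN⟩
  have hSsucc : ∀ k, S (k + 1) = T (S k) := fun k => Function.iterate_succ_apply' T k _
  have hsub : ∀ k, (S (k + 1)).1 ⊆ {x ∈ (S k).1 | sInf (S k).1 < x} := by
    intro k
    rw [hSsucc k]
    exact (stepex (S k).1 (S k).2.2).choose_spec.1
  have hor : ∀ k, Accepts 𝓕 (insert (sInf (S k).1) G) (S (k + 1)).1 ∨
      ∀ A : Set ℕ, A ⊆ {x ∈ (S k).1 | sInf (S k).1 < x} → A.Infinite →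
        ¬ Accepts 𝓕 (insert (sInf (S k).1) G) A := by
    intro k
    rw [hSsucc k]
    exact (stepex (S k).1 (S k).2.2).choose_spec.2.2
  set n : ℕ → ℕ := fun k => sInf (S k).1 with hn
  have hchain : ∀ k j, k ≤ j → (S j).1 ⊆ (S k).1 := by
    intro k j hkj
    induction j, hkj using Nat.le_induction with
    | base => exact subset_rfl
    | succ j hkj ih => exact (Set.Subset.trans (hsub j) tail_subset).trans ih
  have hmem : ∀ k, n k ∈ (S k).1 := fun k => Nat.sInf_mem (S k).2.2.nonempty
  have hlt : ∀ k j, k < j → n k < n j := by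
    intro k j hkj
    have h1 : (S j).1 ⊆ {x ∈ (S k).1 | n k < x} := (hchain (k + 1) j hkj).trans (hsub k)
    exact (h1 (hmem j)).2
  have hninj : Function.Injective n := by
    intro a b hab
    rcases lt_trichotomy a b with h | h | h
    · exact absurd hab (Nat.ne_of_lt (hlt _ _ h))
    · exact h
    · exact absurd hab.symm (Nat.ne_of_lt (hlt _ _ h))
  have hnN : ∀ k, n k ∈ N := fun k => (S k).2.1 (hmem k)
  by_cases hK : {k : ℕ | Accepts 𝓕 (insert (n k) G) (S (k + 1)).1}.Infinite
  · exfalso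
    have himg : (n '' {k : ℕ | Accepts 𝓕 (insert (n k) G) (S (k + 1)).1}).Infinite :=
      Set.Infinite.image (Set.injOn_of_injective hninj) hK
    apply hrej (n '' {k : ℕ | Accepts 𝓕 (insert (n k) G) (S (k + 1)).1})
      (by rintro x ⟨k, _, rfl⟩; exact hnN k) himg
    intro V hV hVinf
    have hmV : sInf V ∈ V := Nat.sInf_mem hVinf.nonempty
    obtain ⟨k, hkK, hkm⟩ := hV hmV
    have hV' : V \ {sInf V} ⊆ (S (k + 1)).1 := by
      rintro x ⟨hxV, hxm⟩
      obtain ⟨j, _, hjx⟩ := hV hxV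
      have hxgt : sInf V < x := by
        rcases lt_or_eq_of_le (Nat.sInf_le hxV) with h | h
        · exact h
        · exact absurd h.symm (by simpa using hxm)
      have hkj : k < j := by
        rcases lt_trichotomy k j with h | h | h
        · exact h
        · exfalso; rw [← h, hkm] at hjx; omega
        · exfalso
          have h2 := hlt j k h
          rw [hjx, hkm] at h2
          omega
      exact hchain (k + 1) j hkj (by rw [← hjx]; exact hmem j)
    obtain ⟨P, hP, hPF⟩ := hkK (V \ {sInf V}) hV' (hVinf.diff (Set.finite_singleton _))
    refine ⟨insert (sInf V) P, ?_, ?_⟩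
    · exact isInitSeg_insert_min hmV (fun y hy => Nat.sInf_le hy) hP
    · have he : G ∪ insert (sInf V) P = insert (n k) G ∪ P := by
        rw [Finset.union_insert, Finset.insert_union, hkm]
      rw [he]; exact hPF
  · have hKfin : {k : ℕ | Accepts 𝓕 (insert (n k) G) (S (k + 1)).1}.Finite :=
      Set.not_infinite.mp hK
    obtain ⟨b, hb⟩ := hKfin.bddAbove
    refine ⟨n '' {k | b + 1 ≤ k}, by rintro x ⟨k, _, rfl⟩; exact hnN k,
      Set.Infinite.image (Set.injOn_of_injective hninj) (Set.Ici_infinite (b + 1)), ?_⟩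
    rintro m ⟨k, hk, rfl⟩ W hWsub hWinf hWacc
    have hknK : k ∉ {k : ℕ | Accepts 𝓕 (insert (n k) G) (S (k + 1)).1} := by
      intro hmem'
      have := hb hmem'
      simp only [Set.mem_setOf_eq] at hk
      omega
    have hW' : {x ∈ W | n k < x} ⊆ {x ∈ (S k).1 | n k < x} := by
      rintro x ⟨hxW, hxgt⟩
      obtain ⟨j, _, hjx⟩ := hWsub hxW
      have hkj : k ≤ j := by
        by_contra hc
        push_neg at hc
        have h2 := hlt j k hc
        rw [hjx] at h2
        omega
      exact ⟨hchain k j hkj (by rw [← hjx]; exact hmem j), hxgt⟩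
    have hW'' : Accepts 𝓕 (insert (n k) G) {x ∈ W | n k < x} :=
      accepts_mono hWacc (fun x hx => hx.1)
    rcases hor k with hA | hA
    · exact hknK hA
    · exact hA _ hW' (tail_infinite hWinf _) hW''

/-- Iterated rejection step for a finite collection of sets. -/
lemma rejects_family {𝓕 : Set (Finset ℕ)} (𝒢 : Finset (Finset ℕ)) :
    ∀ N : Set ℕ, N.Infinite → (∀ G ∈ 𝒢, Rejects 𝓕 G N) →
      ∃ N', N' ⊆ N ∧ N'.Infinite ∧ ∀ G ∈ 𝒢, ∀ n ∈ N', Rejects 𝓕 (insert n G) N' := by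
  classical
  induction 𝒢 using Finset.induction_on with
  | empty => exact fun N hN _ => ⟨N, subset_rfl, hN, by simp⟩
  | @insert G₀ 𝒢 hG₀ ih =>
    intro N hN h
    obtain ⟨N₁, h1, h2, h3⟩ := ih N hN (fun G hG => h G (Finset.mem_insert_of_mem hG))
    obtain ⟨N₂, g1, g2, g3⟩ :=
      exists_reject_insert h2 (rejects_mono (h G₀ (Finset.mem_insert_self _ _)) h1)
    refine ⟨N₂, g1.trans h1, g2, ?_⟩
    intro G hG m hm
    rcases Finset.mem_insert.mp hG with rfl | hG
    · exact g3 m hm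
    · exact rejects_mono (h3 G hG m (g1 hm)) g1

/-- Galvin's lemma (subset version). -/
theorem galvin (𝓕 : Set (Finset ℕ)) (M : Set ℕ) (hM : M.Infinite) :
    ∃ N, N ⊆ M ∧ N.Infinite ∧
      ((∀ G : Finset ℕ, ↑G ⊆ N → G ∉ 𝓕) ∨ Accepts 𝓕 ∅ N) := by
  classical
  by_cases hacc : ∃ N, N ⊆ M ∧ N.Infinite ∧ Accepts 𝓕 ∅ N
  · obtain ⟨N, h1, h2, h3⟩ := hacc
    exact ⟨N, h1, h2, Or.inr h3⟩
  have hrej : Rejects 𝓕 ∅ M := by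
    intro N' h1 h2 hA
    exact hacc ⟨N', h1, h2, hA⟩
  set Inv : Finset ℕ × Set ℕ → Prop := fun p =>
    p.2 ⊆ M ∧ p.2.Infinite ∧ (∀ d ∈ p.1, ∀ x ∈ p.2, d < x) ∧ (↑p.1 : Set ℕ) ⊆ M ∧
      ∀ G ∈ p.1.powerset, Rejects 𝓕 G p.2 with hInv
  have stepex : ∀ p : Finset ℕ × Set ℕ, Inv p →
      ∃ q : Finset ℕ × Set ℕ, Inv q ∧ q.2 ⊆ p.2 ∧ ∃ m ∈ p.2, q.1 = insert m p.1 := by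
    intro p hp
    obtain ⟨h1, h2, h3, h4, h5⟩ := hp
    obtain ⟨N', g1, g2, g3⟩ := rejects_family p.1.powerset p.2 h2 h5
    have hmN' : sInf N' ∈ N' := Nat.sInf_mem g2.nonempty
    refine ⟨(insert (sInf N') p.1, {x ∈ N' | sInf N' < x}),
      ⟨?_, tail_infinite g2 _, ?_, ?_, ?_⟩, (tail_subset.trans g1 : _), sInf N', g1 hmN', rfl⟩
    · exact (tail_subset.trans g1).trans h1
    · intro d hd x hx
      rcases Finset.mem_insert.mp hd with rfl | hd
      · exact hx.2
      · exact h3 d hd x (g1 (tail_subset hx))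
    · rw [Finset.coe_insert]
      exact Set.insert_subset (h1 (g1 hmN')) h4
    · intro G hG
      rw [Finset.mem_powerset] at hG
      by_cases hm : sInf N' ∈ G
      · have heq : G = insert (sInf N') (G.erase (sInf N')) := (Finset.insert_erase hm).symm
        rw [heq]
        exact rejects_mono
          (g3 (G.erase (sInf N')) (Finset.mem_powerset.mpr (Finset.subset_insert_iff.mp hG))
            (sInf N') hmN') tail_subset
      · have hGsub : G ⊆ p.1 := by
          intro x hx
          rcases Finset.mem_insert.mp (hG hx) with rfl | hx'
          · exact absurd hx hm
          · exact hx'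
        exact rejects_mono (h5 G (Finset.mem_powerset.mpr hGsub)) (tail_subset.trans g1)
  have inv₀ : Inv (∅, M) := by
    refine ⟨subset_rfl, hM, by simp, by simp, ?_⟩
    intro G hG
    rw [Finset.mem_powerset, Finset.subset_empty] at hG
    rw [hG]
    exact hrej
  let T : {p : Finset ℕ × Set ℕ // Inv p} → {p : Finset ℕ × Set ℕ // Inv p} :=
    fun p => ⟨(stepex p.1 p.2).choose, (stepex p.1 p.2).choose_spec.1⟩
  let S : ℕ → {p : Finset ℕ × Set ℕ // Inv p} := fun k => T^[k] ⟨(∅, M), inv₀⟩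
  have hSsucc : ∀ k, S (k + 1) = T (S k) := fun k => Function.iterate_succ_apply' T k _
  have hstep : ∀ k, (S (k + 1)).1.2 ⊆ (S k).1.2 ∧
      ∃ m ∈ (S k).1.2, (S (k + 1)).1.1 = insert m (S k).1.1 := by
    intro k
    rw [hSsucc k]
    exact (stepex (S k).1 (S k).2).choose_spec.2
  have hcard : ∀ k, k ≤ (S k).1.1.card := by
    intro k
    induction k with
    | zero => simp
    | succ k ih =>
      obtain ⟨_, m, hm, he⟩ := hstep k
      have hmnot : m ∉ (S k).1.1 := by
        intro hmem'
        exact absurd ((S k).2.2.2.1 m hmem' m hm) (lt_irrefl m)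
      rw [he, Finset.card_insert_of_notMem hmnot]
      omega
  have hDmono : ∀ k j, k ≤ j → (S k).1.1 ⊆ (S j).1.1 := by
    intro k j hkj
    induction j, hkj using Nat.le_induction with
    | base => exact subset_rfl
    | succ j _ ih =>
      obtain ⟨_, m, _, he⟩ := hstep j
      rw [he]
      exact ih.trans (Finset.subset_insert _ _)
  have hfind : ∀ G : Finset ℕ, (↑G : Set ℕ) ⊆ ⋃ k, ((S k).1.1 : Set ℕ) →
      ∃ k, G ⊆ (S k).1.1 := by
    intro G
    induction G using Finset.induction_on with
    | empty => exact fun _ => ⟨0, by simp⟩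
    | @insert a G' ha ih =>
      intro hG
      obtain ⟨k₁, hk₁⟩ := ih ((Finset.coe_subset.mpr (Finset.subset_insert a G')).trans hG)
      obtain ⟨k₂, hk₂⟩ : ∃ k, a ∈ (S k).1.1 := by
        have := hG (by simp : a ∈ (↑(insert a G') : Set ℕ))
        simpa [Set.mem_iUnion] using this
      exact ⟨max k₁ k₂, Finset.insert_subset (hDmono k₂ _ (le_max_right _ _) hk₂)
        (hk₁.trans (hDmono k₁ _ (le_max_left _ _)))⟩
  refine ⟨⋃ k, ((S k).1.1 : Set ℕ), ?_, ?_, Or.inl ?_⟩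
  · exact Set.iUnion_subset (fun k => (S k).2.2.2.2.1)
  · intro hfin
    have hsub' : ∀ k, (S k).1.1 ⊆ hfin.toFinset := by
      intro k x hx
      rw [Set.Finite.mem_toFinset]
      exact Set.mem_iUnion.mpr ⟨k, hx⟩
    have h1 := hcard (hfin.toFinset.card + 1)
    have h2 := Finset.card_le_card (hsub' (hfin.toFinset.card + 1))
    omega
  · intro G hG hGF
    obtain ⟨k, hk⟩ := hfind G hG
    have hrejk := (S k).2.2.2.2.2 G (Finset.mem_powerset.mpr hk)
    exact hrejk (S k).1.2 subset_rfl (S k).2.2.1 (accepts_of_mem hGF)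

/-- The family of "bad traces" for the value `z` over the stem `F`. -/
def Fam (B : Set (Finset ℕ)) (f : Finset ℕ → ℕ) (F : Finset ℕ) (z : ℕ) : Set (Finset ℕ) :=
  {G | ∃ s ∈ B, f s = z ∧ z ∉ s ∧ s \ insert z F = G}

/-- The key step: one can always pick a next element `z` together with an
infinite reservoir `R'` above it that never maps onto `z`. Uses only the
Sperner property of `B`. -/
lemma dagger {B : Set (Finset ℕ)} (hSp : ∀ s ∈ B, ∀ t ∈ B, ¬ s ⊂ t)
    (f : Finset ℕ → ℕ) (F : Finset ℕ) (R : Set ℕ) (hR : R.Infinite) :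
    ∃ z ∈ R, ∃ R' : Set ℕ, R' ⊆ R ∧ R'.Infinite ∧ (∀ x ∈ R', z < x) ∧
      ∀ s ∈ B, ↑s ⊆ (↑(insert z F) : Set ℕ) ∪ R' → f s = z → z ∈ s := by
  classical
  by_contra hcon
  push_neg at hcon
  -- hcon : ∀ z ∈ R, ∀ R', R' ⊆ R → R'.Infinite → (∀ x ∈ R', z < x) →
  --          ∃ s ∈ B, ↑s ⊆ ↑(insert z F) ∪ R' ∧ f s = z ∧ z ∉ s
  have claim : ∀ z ∈ R, ∀ M' : Set ℕ, M' ⊆ R → M'.Infinite → (∀ x ∈ M', z < x) →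
      ∃ N, N ⊆ M' ∧ N.Infinite ∧ Accepts (Fam B f F z) ∅ N := by
    intro z hz M' h1 h2 h3
    obtain ⟨N, g1, g2, g3⟩ := galvin (Fam B f F z) M' h2
    rcases g3 with g3 | g3
    · exfalso
      obtain ⟨s, hsB, hsub, hfs, hzs⟩ := hcon z hz N (g1.trans h1) g2 (fun x hx => h3 x (g1 hx))
      have hG : (↑(s \ insert z F) : Set ℕ) ⊆ N := by
        intro x hx
        rw [Finset.coe_sdiff] at hx
        obtain ⟨hxs, hxn⟩ := hx
        rcases hsub hxs with hx' | hx'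
        · exact absurd hx' hxn
        · exact hx'
      exact g3 (s \ insert z F) hG ⟨s, hsB, hfs, hzs, rfl⟩
    · exact ⟨N, g1, g2, g3⟩
  set Inv : ℕ × Set ℕ → Prop := fun p =>
    p.1 ∈ R ∧ p.2 ⊆ R ∧ p.2.Infinite ∧ (∀ x ∈ p.2, p.1 < x) ∧
      Accepts (Fam B f F p.1) ∅ p.2 with hInv
  have stepexD : ∀ p : ℕ × Set ℕ, Inv p →
      ∃ q : ℕ × Set ℕ, Inv q ∧ q.2 ⊆ p.2 ∧ p.1 < q.1 ∧ q.1 ∈ p.2 := by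
    intro p hp
    obtain ⟨h1, h2, h3, h4, _⟩ := hp
    have hz'mem : sInf p.2 ∈ p.2 := Nat.sInf_mem h3.nonempty
    obtain ⟨N, g1, g2, g3⟩ := claim (sInf p.2) (h2 hz'mem) {x ∈ p.2 | sInf p.2 < x}
      (tail_subset.trans h2) (tail_infinite h3 _) (fun x hx => hx.2)
    exact ⟨(sInf p.2, N), ⟨h2 hz'mem, (g1.trans tail_subset).trans h2, g2,
      fun x hx => (g1 hx).2, g3⟩, g1.trans tail_subset, h4 _ hz'mem, hz'mem⟩
  have init : ∃ p : ℕ × Set ℕ, Inv p := by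
    have hz0 : sInf R ∈ R := Nat.sInf_mem hR.nonempty
    obtain ⟨N, g1, g2, g3⟩ := claim (sInf R) hz0 {x ∈ R | sInf R < x}
      tail_subset (tail_infinite hR _) (fun x hx => hx.2)
    exact ⟨(sInf R, N), hz0, g1.trans tail_subset, g2, fun x hx => (g1 hx).2, g3⟩
  obtain ⟨p0, hp0⟩ := init
  let T : {p : ℕ × Set ℕ // Inv p} → {p : ℕ × Set ℕ // Inv p} :=
    fun p => ⟨(stepexD p.1 p.2).choose, (stepexD p.1 p.2).choose_spec.1⟩
  let S : ℕ → {p : ℕ × Set ℕ // Inv p} := fun k => T^[k] ⟨p0, hp0⟩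
  have hSsucc : ∀ k, S (k + 1) = T (S k) := fun k => Function.iterate_succ_apply' T k _
  have hrel : ∀ k, (S (k + 1)).1.2 ⊆ (S k).1.2 ∧ (S k).1.1 < (S (k + 1)).1.1 ∧
      (S (k + 1)).1.1 ∈ (S k).1.2 := by
    intro k
    rw [hSsucc k]
    exact (stepexD (S k).1 (S k).2).choose_spec.2
  set z : ℕ → ℕ := fun k => (S k).1.1 with hz
  have hManti : ∀ k j, k ≤ j → (S j).1.2 ⊆ (S k).1.2 := by
    intro k j hkj
    induction j, hkj using Nat.le_induction with
    | base => exact subset_rfl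
    | succ j _ ih => exact ((hrel j).1).trans ih
  have hzmono : ∀ k j, k < j → z k < z j := by
    intro k j hkj
    induction j, hkj using Nat.le_induction with
    | base => exact (hrel k).2.1
    | succ j hkj ih => exact ih.trans (hrel j).2.1
  have hzmem : ∀ k j, k < j → z j ∈ (S k).1.2 := by
    intro k j hkj
    rcases Nat.exists_eq_add_of_lt hkj with ⟨d, rfl⟩
    exact hManti k (k + d) (Nat.le_add_right _ _) (hrel (k + d)).2.2
  set c := F.powerset.card with hc
  set V : Set ℕ := z '' {j | c < j} with hV
  have hVinf : V.Infinite := by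
    refine Set.Infinite.image ?_ (Set.Ioi_infinite c)
    intro a _ b _ hab
    rcases lt_trichotomy a b with h | h | h
    · exact absurd hab (Nat.ne_of_lt (hzmono _ _ h))
    · exact h
    · exact absurd hab.symm (Nat.ne_of_lt (hzmono _ _ h))
  have hVsub : ∀ k, k ≤ c → V ⊆ (S k).1.2 := by
    rintro k hk x ⟨j, hj, rfl⟩
    exact hzmem k j (lt_of_le_of_lt hk hj)
  have hw : ∀ k : ℕ, ∃ Ps : Finset ℕ × Finset ℕ, k ≤ c →
      IsInitSeg Ps.1 V ∧ Ps.2 ∈ B ∧ f Ps.2 = z k ∧ z k ∉ Ps.2 ∧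
        Ps.2 \ insert (z k) F = Ps.1 := by
    intro k
    by_cases hk : k ≤ c
    · obtain ⟨P, hP, hPF⟩ := (S k).2.2.2.2.2 V (hVsub k hk) hVinf
      rw [Finset.empty_union] at hPF
      obtain ⟨s, hsB, h1, h2, h3⟩ := hPF
      exact ⟨(P, s), fun _ => ⟨hP, hsB, h1, h2, h3⟩⟩
    · exact ⟨(∅, ∅), fun h => absurd h hk⟩
  choose W hW using hw
  have hmap : ∀ k ∈ Finset.range (c + 1), (W k).2 ∩ F ∈ F.powerset := fun k _ =>
    Finset.mem_powerset.mpr Finset.inter_subset_right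
  obtain ⟨k, hk, k', hk', hkk', heq⟩ :=
    Finset.exists_ne_map_eq_of_card_lt_of_maps_to
      (by rw [Finset.card_range]; omega) hmap
  have hkc : k ≤ c := Nat.lt_succ_iff.mp (Finset.mem_range.mp hk)
  have hkc' : k' ≤ c := Nat.lt_succ_iff.mp (Finset.mem_range.mp hk')
  obtain ⟨hP1, hs1, hf1, hz1, hd1⟩ := hW k hkc
  obtain ⟨hP2, hs2, hf2, hz2, hd2⟩ := hW k' hkc'
  have hdecomp : ∀ j, j ≤ c → (W j).2 = ((W j).2 ∩ F) ∪ (W j).1 := by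
    intro j hj
    obtain ⟨_, _, _, hzj, hdj⟩ := hW j hj
    ext x
    simp only [Finset.mem_union, Finset.mem_inter, ← hdj, Finset.mem_sdiff, Finset.mem_insert]
    constructor
    · intro hx
      by_cases hxF : x ∈ F
      · exact Or.inl ⟨hx, hxF⟩
      · refine Or.inr ⟨hx, ?_⟩
        rintro (rfl | h)
        · exact hzj hx
        · exact hxF h
    · rintro (⟨hx, _⟩ | ⟨hx, _⟩) <;> exact hx
  have hzne : z k ≠ z k' := by
    intro he
    rcases lt_trichotomy k k' with h | h | h
    · exact absurd he (Nat.ne_of_lt (hzmono _ _ h))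
    · exact hkk' h
    · exact absurd he.symm (Nat.ne_of_lt (hzmono _ _ h))
  have hseq : (W k).2 = (W k').2 := by
    rcases initSeg_comparable hP1 hP2 with hPP | hPP
    · have hsub' : (W k).2 ⊆ (W k').2 := by
        rw [hdecomp k hkc, hdecomp k' hkc', heq]
        exact Finset.union_subset_union_right hPP
      by_contra hne
      exact hSp _ hs1 _ hs2 (Finset.ssubset_iff_subset_ne.mpr ⟨hsub', hne⟩)
    · have hsub' : (W k').2 ⊆ (W k).2 := by
        rw [hdecomp k hkc, hdecomp k' hkc', heq]
        exact Finset.union_subset_union_right hPP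
      by_contra hne
      exact hSp _ hs2 _ hs1 (Finset.ssubset_iff_subset_ne.mpr ⟨hsub', Ne.symm hne⟩)
  apply hzne
  rw [← hf1, ← hf2, hseq]

end BFS

theorem barrier_free_set (B : Set (Finset ℕ)) (X : Set ℕ) (hX : X.Infinite)
    (hB : IsBarrierOn B X) (f : Finset ℕ → ℕ) :
    ∃ H : Set ℕ, H ⊆ X ∧ H.Infinite ∧
      ∀ s ∈ B, ↑s ⊆ H → f s ∈ H → f s ∈ s := by
  classical
  obtain ⟨-, hSp, -⟩ := hB
  set Inv : Finset ℕ × Set ℕ → Prop := fun p =>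
    p.2 ⊆ X ∧ p.2.Infinite ∧ (∀ a ∈ p.1, ∀ x ∈ p.2, a < x) ∧ (↑p.1 : Set ℕ) ⊆ X ∧
      ∀ s ∈ B, ↑s ⊆ (↑p.1 : Set ℕ) ∪ p.2 → f s ∈ p.1 → f s ∈ s with hInv
  have stepexM : ∀ p : Finset ℕ × Set ℕ, Inv p →
      ∃ q : Finset ℕ × Set ℕ, Inv q ∧ q.2 ⊆ p.2 ∧ ∃ m ∈ p.2, q.1 = insert m p.1 := by
    intro p hp
    obtain ⟨h1, h2, h3, h4, h5⟩ := hp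
    obtain ⟨zz, hzR, R', g1, g2, g3, g4⟩ := BFS.dagger hSp f p.1 p.2 h2
    have hcover : (↑(insert zz p.1) : Set ℕ) ∪ R' ⊆ (↑p.1 : Set ℕ) ∪ p.2 := by
      intro x hx
      rcases hx with hx | hx
      · rw [Finset.coe_insert] at hx
        rcases hx with rfl | hx
        · exact Or.inr hzR
        · exact Or.inl hx
      · exact Or.inr (g1 hx)
    refine ⟨(insert zz p.1, R'), ⟨g1.trans h1, g2, ?_, ?_, ?_⟩, g1, zz, hzR, rfl⟩
    · intro a ha x hx
      rcases Finset.mem_insert.mp ha with rfl | ha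
      · exact g3 x hx
      · exact h3 a ha x (g1 hx)
    · rw [Finset.coe_insert]
      exact Set.insert_subset (h1 hzR) h4
    · intro s hsB hsub hfs
      rcases Finset.mem_insert.mp hfs with hfz | hfs'
      · have hzs : zz ∈ s := g4 s hsB hsub hfz
        rw [hfz]
        exact hzs
      · exact h5 s hsB (hsub.trans hcover) hfs'
  have inv₀ : Inv (∅, X) := ⟨subset_rfl, hX, by simp, by simp, fun s _ _ hf => by simp at hf⟩
  let T : {p : Finset ℕ × Set ℕ // Inv p} → {p : Finset ℕ × Set ℕ // Inv p} :=
    fun p => ⟨(stepexM p.1 p.2).choose, (stepexM p.1 p.2).choose_spec.1⟩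
  let S : ℕ → {p : Finset ℕ × Set ℕ // Inv p} := fun k => T^[k] ⟨(∅, X), inv₀⟩
  have hSsucc : ∀ k, S (k + 1) = T (S k) := fun k => Function.iterate_succ_apply' T k _
  have hstep : ∀ k, (S (k + 1)).1.2 ⊆ (S k).1.2 ∧
      ∃ m ∈ (S k).1.2, (S (k + 1)).1.1 = insert m (S k).1.1 := by
    intro k
    rw [hSsucc k]
    exact (stepexM (S k).1 (S k).2).choose_spec.2
  have hRanti : ∀ k j, k ≤ j → (S j).1.2 ⊆ (S k).1.2 := by
    intro k j hkj
    induction j, hkj using Nat.le_induction with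
    | base => exact subset_rfl
    | succ j _ ih => exact ((hstep j).1).trans ih
  have hFmono : ∀ k j, k ≤ j → (S k).1.1 ⊆ (S j).1.1 := by
    intro k j hkj
    induction j, hkj using Nat.le_induction with
    | base => exact subset_rfl
    | succ j _ ih =>
      obtain ⟨_, m, _, he⟩ := (hstep j)
      rw [he]
      exact ih.trans (Finset.subset_insert _ _)
  have hcard : ∀ k, k ≤ (S k).1.1.card := by
    intro k
    induction k with
    | zero => simp
    | succ k ih =>
      obtain ⟨_, m, hm, he⟩ := hstep k
      have hmnot : m ∉ (S k).1.1 := by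
        intro hmem'
        exact absurd ((S k).2.2.2.1 m hmem' m hm) (lt_irrefl m)
      rw [he, Finset.card_insert_of_notMem hmnot]
      omega
  have hFsub : ∀ j k, ((S j).1.1 : Set ℕ) ⊆ ((S k).1.1 : Set ℕ) ∪ (S k).1.2 := by
    intro j
    induction j with
    | zero =>
      intro k
      have : (S 0).1.1 = (∅ : Finset ℕ) := rfl
      rw [this]
      simp
    | succ j ih =>
      intro k
      rcases le_or_gt (j + 1) k with h | h
      · intro x hx
        exact Or.inl (Finset.coe_subset.mpr (hFmono (j + 1) k h) hx)
      · obtain ⟨_, m, hm, he⟩ := hstep j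
        rw [he, Finset.coe_insert]
        intro x hx
        rcases hx with rfl | hx
        · exact Or.inr (hRanti k j (Nat.lt_succ_iff.mp h) hm)
        · exact ih k hx
  refine ⟨⋃ k, ((S k).1.1 : Set ℕ), ?_, ?_, ?_⟩
  · exact Set.iUnion_subset (fun k => (S k).2.2.2.2.1)
  · intro hfin
    have hsub' : ∀ k, (S k).1.1 ⊆ hfin.toFinset := by
      intro k x hx
      rw [Set.Finite.mem_toFinset]
      exact Set.mem_iUnion.mpr ⟨k, hx⟩
    have h1 := hcard (hfin.toFinset.card + 1)
    have h2 := Finset.card_le_card (hsub' (hfin.toFinset.card + 1))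
    omega
  · intro s hsB hsubH hfH
    obtain ⟨m, hm⟩ : ∃ m, f s ∈ (S m).1.1 := by
      simpa [Set.mem_iUnion] using hfH
    have hsub' : ↑s ⊆ ((S m).1.1 : Set ℕ) ∪ (S m).1.2 := by
      intro x hx
      obtain ⟨j, hj⟩ : ∃ j, x ∈ ((S j).1.1 : Set ℕ) := by
        simpa [Set.mem_iUnion] using hsubH hx
      exact hFsub j m hj
    exact (S m).2.2.2.2.2 s hsB hsub' hm
end

section
/- Barrier thin set theorem: Let B be a barrier on an infinite set X ⊆ ℕ. For every f : B → ℕ there exists an infinite H ⊆ X such that the image of f restricted to B|H = { s ∈ B : s ⊆ H } is not all of ℕ. -/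
open Set

variable {B : Set (Finset ℕ)} {X : Set ℕ} {C : Type*}

def EndExtends (B : Set (Finset ℕ)) (X : Set ℕ) (t s : Finset ℕ) : Prop :=
  (∀ b ∈ B, ¬ b ⊆ s) ∧ ∃ n ∈ X, (∀ x ∈ s, x < n) ∧ t = insert n s

theorem wellFounded_endExtends (hdense : ∀ Y ⊆ X, Y.Infinite → ∃ b ∈ B, ↑b ⊆ Y) :
    WellFounded (EndExtends B X) := by
  rw [wellFounded_iff_isEmpty_descending_chain]
  refine ⟨fun ⟨a, ha⟩ => ?_⟩
  choose n hnX hlt heq using fun k => (ha k).2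
  have hmem : ∀ k, n k ∈ a (k + 1) := fun k => heq k ▸ Finset.mem_insert_self _ _
  have hmono : Monotone a :=
    monotone_nat_of_le_succ fun k => heq k ▸ Finset.subset_insert _ _
  have hn : StrictMono n := strictMono_nat_of_lt_succ fun k => hlt (k + 1) _ (hmem k)
  obtain ⟨b, hbB, hb⟩ :=
    hdense (range n) (range_subset_iff.2 hnX) (infinite_range_of_injective hn.injective)
  refine (ha (b.sup id + 1)).1 b hbB fun y hy => ?_
  obtain ⟨k, rfl⟩ := hb hy
  exact hmono (Nat.succ_le_succ ((hn.id_le k).trans (Finset.le_sup (f := id) hy))) (hmem k)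

def IsMonochromaticAbove (B : Set (Finset ℕ)) (g : Finset ℕ → C) (s : Finset ℕ) (Z : Set ℕ)
    (c : C) : Prop :=
  ∀ t ∈ B, s ⊆ t → ↑(t \ s) ⊆ Z → g t = c

theorem IsMonochromaticAbove.mono {g : Finset ℕ → C} {s : Finset ℕ} {Z Z' : Set ℕ} {c : C}
    (h : IsMonochromaticAbove B g s Z c) (hZ : Z' ⊆ Z) : IsMonochromaticAbove B g s Z' c :=
  fun t ht hst htZ => h t ht hst (htZ.trans hZ)

theorem isMonochromaticAbove_of_exists_subset (hsperner : ∀ s ∈ B, ∀ t ∈ B, ¬ s ⊂ t)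
    (g : Finset ℕ → C) {s : Finset ℕ} (hs : ∃ b ∈ B, b ⊆ s) (Z : Set ℕ) :
    ∃ c, IsMonochromaticAbove B g s Z c := by
  obtain ⟨b, hbB, hbs⟩ := hs
  exact ⟨g b, fun t ht hst _ =>
    congrArg g (eq_of_subset_of_not_ssubset (hbs.trans hst) (hsperner b hbB t ht)).symm⟩

theorem isMonochromaticAbove_of_forall_insert {g : Finset ℕ → C} {s : Finset ℕ} {H : Set ℕ}
    {c : C} (hfree : ∀ b ∈ B, ¬ b ⊆ s)
    (h : ∀ m ∈ H, IsMonochromaticAbove B g (insert m s) (H ∩ Ioi m) c) :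
    IsMonochromaticAbove B g s H c := by
  intro t ht hst htH
  have hne : (t \ s).Nonempty := Finset.sdiff_nonempty.2 fun hts => hfree t ht hts
  set m := (t \ s).min' hne
  have hm : m ∈ t \ s := Finset.min'_mem _ hne
  refine h m (htH hm) t ht (Finset.insert_subset (Finset.mem_sdiff.1 hm).1 hst) fun y hy => ?_
  simp only [Finset.coe_sdiff, Finset.coe_insert, mem_sdiff, mem_insert_iff, not_or] at hy
  have hyts : y ∈ t \ s := Finset.mem_sdiff.2 ⟨hy.1, hy.2.2⟩
  exact ⟨htH hyts, lt_of_le_of_ne (Finset.min'_le _ _ hyts) (Ne.symm hy.2.1)⟩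

theorem exists_infinite_fusion [Finite C] {Y : Set ℕ} (hY : Y.Infinite)
    (Q : ℕ → Set ℕ → C → Prop) (hQ : ∀ m Z Z' c, Z' ⊆ Z → Q m Z c → Q m Z' c)
    (hstep : ∀ W ⊆ Y, W.Infinite → ∃ Z ⊆ W ∩ Ioi (sInf W), Z.Infinite ∧ ∃ c, Q (sInf W) Z c) :
    ∃ H ⊆ Y, H.Infinite ∧ ∃ c, ∀ m ∈ H, Q m (H ∩ Ioi m) c := by
  have : Nonempty C := let ⟨_, _, _, c, _⟩ := hstep Y subset_rfl hY; ⟨c⟩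
  choose! Z hZW hZ col hQZ using hstep
  set Ys : ℕ → Set ℕ := fun i => Z^[i] Y
  have hsucc : ∀ i, Ys (i + 1) = Z (Ys i) := fun i => Function.iterate_succ_apply' _ _ _
  have hYs : ∀ i, Ys i ⊆ Y ∧ (Ys i).Infinite := by
    intro i
    induction i with
    | zero => exact ⟨subset_rfl, hY⟩
    | succ i ih =>
      rw [hsucc]
      exact ⟨(hZW _ ih.1 ih.2).trans (inter_subset_left.trans ih.1), hZ _ ih.1 ih.2⟩
  have hZsub : ∀ i, Ys (i + 1) ⊆ Ys i ∩ Ioi (sInf (Ys i)) :=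
    fun i => hsucc i ▸ hZW _ (hYs i).1 (hYs i).2
  have hmem : ∀ i, sInf (Ys i) ∈ Ys i := fun i => Nat.sInf_mem (hYs i).2.nonempty
  have hanti : Antitone Ys := antitone_nat_of_succ_le fun i => (hZsub i).trans inter_subset_left
  have hmin : StrictMono fun i => sInf (Ys i) :=
    strictMono_nat_of_lt_succ fun i => (hZsub i (hmem (i + 1))).2
  obtain ⟨c, hc⟩ := Finite.exists_infinite_fiber fun i => col (Ys i)
  refine ⟨(fun i => sInf (Ys i)) '' ((fun i => col (Ys i)) ⁻¹' {c}), ?_,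
    (infinite_coe_iff.1 hc).image hmin.injective.injOn, c, ?_⟩
  · exact image_subset_iff.2 fun i _ => (hYs i).1 (hmem i)
  · rintro _ ⟨i, hi, rfl⟩
    have hi : col (Ys i) = c := hi
    refine hQ _ _ _ _ ?_ (hi ▸ hQZ _ (hYs i).1 (hYs i).2)
    rintro _ ⟨⟨j, -, rfl⟩, hj⟩
    exact hsucc i ▸ hanti (hmin.lt_iff_lt.1 hj) (hmem j)

theorem exists_isMonochromaticAbove [Finite C] (hsperner : ∀ s ∈ B, ∀ t ∈ B, ¬ s ⊂ t)
    (hdense : ∀ Y ⊆ X, Y.Infinite → ∃ b ∈ B, ↑b ⊆ Y) (g : Finset ℕ → C) (s : Finset ℕ) :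
    ∀ Y ⊆ X, Y.Infinite → (∀ x ∈ s, ∀ y ∈ Y, x < y) →
      ∃ Z ⊆ Y, Z.Infinite ∧ ∃ c, IsMonochromaticAbove B g s Z c := by
  induction s using (wellFounded_endExtends hdense).induction with
  | _ s ih =>
  intro Y hYX hY hsY
  by_cases hs : ∃ b ∈ B, b ⊆ s
  · exact ⟨Y, subset_rfl, hY, isMonochromaticAbove_of_exists_subset hsperner g hs Y⟩
  push Not at hs
  have hstep : ∀ W ⊆ Y, W.Infinite → ∃ Z ⊆ W ∩ Ioi (sInf W), Z.Infinite ∧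
      ∃ c, IsMonochromaticAbove B g (insert (sInf W) s) Z c := by
    intro W hWY hW
    have hm : sInf W ∈ W := Nat.sInf_mem hW.nonempty
    refine ih _ ⟨hs, sInf W, hYX (hWY hm), fun x hx => hsY x hx _ (hWY hm), rfl⟩ _
      (inter_subset_left.trans (hWY.trans hYX)) ?_ ?_
    · simpa only [← sdiff_compl, compl_Ioi] using hW.sdiff (finite_Iic _)
    · simp only [Finset.mem_insert, forall_eq_or_imp]
      exact ⟨fun y hy => hy.2, fun x hx y hy => hsY x hx y (hWY hy.1)⟩
  obtain ⟨H, hHY, hH, c, hc⟩ := exists_infinite_fusion hY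
    (fun m Z c => IsMonochromaticAbove B g (insert m s) Z c) (fun _ _ _ _ hZ h => h.mono hZ) hstep
  exact ⟨H, hHY, hH, c, isMonochromaticAbove_of_forall_insert hs hc⟩

theorem IsBarrierOn.exists_infinite_monochromatic [Finite C] (hB : IsBarrierOn B X)
    {Y : Set ℕ} (hYX : Y ⊆ X) (hY : Y.Infinite) (g : Finset ℕ → C) :
    ∃ H ⊆ Y, H.Infinite ∧ ∃ c, ∀ s ∈ B, ↑s ⊆ H → g s = c := by
  obtain ⟨H, hHY, hH, c, hc⟩ := exists_isMonochromaticAbove hB.2.1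
    (fun Y hYX hY => (hB.2.2 Y hYX hY).imp fun _ hs => ⟨hs.1, hs.2.1⟩) g ∅ Y hYX hY (by simp)
  exact ⟨H, hHY, hH, c, fun s hs hsH => hc s hs s.empty_subset (by simpa using hsH)⟩

theorem barrier_thin_set (B : Set (Finset ℕ)) (X : Set ℕ) (hX : X.Infinite)
    (hB : IsBarrierOn B X) (f : Finset ℕ → ℕ) :
    ∃ H : Set ℕ, H ⊆ X ∧ H.Infinite ∧
      ∃ c : ℕ, ∀ s ∈ B, ↑s ⊆ H → f s ≠ c := by
  obtain ⟨H, hHX, hH, c, hc⟩ := hB.exists_infinite_monochromatic subset_rfl hX (f · = 0)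
  by_cases h0 : c
  · refine ⟨H, hHX, hH, 1, fun s hs hsH => ?_⟩
    rw [(hc s hs hsH ▸ h0 : f s = 0)]
    exact zero_ne_one
  · exact ⟨H, hHX, hH, 0, fun s hs hsH hf => h0 (hc s hs hsH ▸ hf)⟩
end

section
/- The barrier thin set theorem follows from the barrier free set theorem: if B is a barrier on X, f : B → ℕ, and H ⊆ X is an infinite set free for f (i.e., for all s ∈ B with s ⊆ H, if f(s) ∈ H then f(s) ∈ s), then for any nonempty Y ⊆ H with H \ Y infinite, the set H \ Y is thin for f, i.e., the image of f on { s ∈ B : s ⊆ H \ Y } is not all of ℕ. -/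
theorem thin_of_free (B : Set (Finset ℕ)) (X : Set ℕ) (hX : X.Infinite)
    (hB : IsBarrierOn B X) (f : Finset ℕ → ℕ)
    (H : Set ℕ) (hHX : H ⊆ X) (hH : H.Infinite)
    (hfree : ∀ s ∈ B, ↑s ⊆ H → f s ∈ H → f s ∈ s)
    (Y : Set ℕ) (hYH : Y ⊆ H) (hYne : Y.Nonempty) (hHY : (H \ Y).Infinite) :
    ∃ c : ℕ, ∀ s ∈ B, ↑s ⊆ H \ Y → f s ≠ c := by
  obtain ⟨y, hy⟩ := hYne
  refine ⟨y, fun s hsB hsHY hfy => ?_⟩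
  have hsH : ↑s ⊆ H := hsHY.trans (Set.diff_subset)
  have hfsH : f s ∈ H := hfy ▸ hYH hy
  have := hfree s hsB hsH hfsH
  exact (hsHY this).2 (hfy ▸ hy)
end

section
/- Barrier rainbow Ramsey theorem: Let B be a barrier on an infinite set X ⊆ ℕ and let k ∈ ℕ. For every k-bounded f : B → ℕ (each color is used by at most k elements of B) there exists an infinite H ⊆ X such that f is injective on B|H = { s ∈ B : s ⊆ H }. -/
namespace RRB

lemma tail_infinite {Y : Set ℕ} (hY : Y.Infinite) (m : ℕ) : {z ∈ Y | m < z}.Infinite := by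
  have h : {z ∈ Y | m < z} = Y \ Set.Iic m := by
    ext z; simp [Set.mem_Iic, not_le]
  rw [h]
  exact hY.diff (Set.finite_Iic m)

/-- `s` is "accepted" by `Y` (relative to a family `Fam`). -/
def Acc (Fam : Set (Finset ℕ)) (s : Finset ℕ) (Y : Set ℕ) : Prop :=
  ∀ Z, Z ⊆ Y → Z.Infinite → ∃ t, IsInitSeg t Z ∧ s ∪ t ∈ Fam

/-- `s` is "rejected" by `Y` (relative to a family `Fam`). -/
def Rej (Fam : Set (Finset ℕ)) (s : Finset ℕ) (Y : Set ℕ) : Prop :=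
  ∀ Y', Y' ⊆ Y → Y'.Infinite → ¬ Acc Fam s Y'

lemma Acc.mono {Fam : Set (Finset ℕ)} {s : Finset ℕ} {Y Y' : Set ℕ}
    (h : Acc Fam s Y) (hsub : Y' ⊆ Y) : Acc Fam s Y' :=
  fun Z hZ hZi => h Z (hZ.trans hsub) hZi

lemma Rej.mono {Fam : Set (Finset ℕ)} {s : Finset ℕ} {Y Y' : Set ℕ}
    (h : Rej Fam s Y) (hsub : Y' ⊆ Y) : Rej Fam s Y' :=
  fun Z hZ hZi => h Z (hZ.trans hsub) hZi

lemma mem_acc {Fam : Set (Finset ℕ)} {s : Finset ℕ} (h : s ∈ Fam) (Y : Set ℕ) :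
    Acc Fam s Y := by
  intro Z _ _
  refine ⟨∅, ⟨by simp, ?_⟩, by simpa using h⟩
  intro y _ _ x hx
  exact absurd hx (Finset.notMem_empty x)

lemma decide_one (Fam : Set (Finset ℕ)) (s : Finset ℕ) (Y : Set ℕ) (hY : Y.Infinite) :
    ∃ Y', Y' ⊆ Y ∧ Y'.Infinite ∧ (Acc Fam s Y' ∨ Rej Fam s Y') := by
  by_cases h : ∃ Y', Y' ⊆ Y ∧ Y'.Infinite ∧ Acc Fam s Y'
  · obtain ⟨Y', h1, h2, h3⟩ := h
    exact ⟨Y', h1, h2, Or.inl h3⟩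
  · push_neg at h
    exact ⟨Y, subset_rfl, hY, Or.inr (fun Y' h1 h2 => h Y' h1 h2)⟩

lemma decide_finset (Fam : Set (Finset ℕ)) (L : Finset (Finset ℕ)) :
    ∀ Y : Set ℕ, Y.Infinite →
      ∃ Y', Y' ⊆ Y ∧ Y'.Infinite ∧ ∀ s ∈ L, Acc Fam s Y' ∨ Rej Fam s Y' := by
  classical
  induction L using Finset.induction_on with
  | empty => exact fun Y hY => ⟨Y, subset_rfl, hY, by simp⟩
  | @insert a L _ ih =>
    intro Y hY
    obtain ⟨Y1, h1, h2, h3⟩ := ih Y hY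
    obtain ⟨Y2, g1, g2, g3⟩ := decide_one Fam a Y1 h2
    refine ⟨Y2, g1.trans h1, g2, ?_⟩
    intro s hs
    rcases Finset.mem_insert.mp hs with rfl | hsL
    · exact g3
    · rcases h3 s hsL with h | h
      · exact Or.inl (h.mono g1)
      · exact Or.inr (h.mono g1)

theorem galvin_reject (Fam : Set (Finset ℕ)) (M : Set ℕ) (hM : M.Infinite)
    (hrej : Rej Fam ∅ M) :
    ∃ N, N ⊆ M ∧ N.Infinite ∧ ∀ s : Finset ℕ, ↑s ⊆ N → s ∉ Fam := by
  classical
  set Inv : Finset ℕ × Set ℕ → Prop :=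
    fun p => p.2 ⊆ M ∧ p.2.Infinite ∧ ∀ s ∈ p.1.powerset, Acc Fam s p.2 ∨ Rej Fam s p.2
    with hInvdef
  have inv0 : Inv (∅, M) := by
    refine ⟨subset_rfl, hM, ?_⟩
    intro s hs
    simp only [Finset.powerset_empty, Finset.mem_singleton] at hs
    subst hs
    exact Or.inr hrej
  have step : ∀ p : Finset ℕ × Set ℕ, Inv p →
      ∃ q : Finset ℕ × Set ℕ, Inv q ∧ q.1 = insert (sInf p.2) p.1 ∧
        q.2 ⊆ {z ∈ p.2 | sInf p.2 < z} := by
    rintro ⟨F, Y⟩ ⟨h1, h2, _h3⟩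
    obtain ⟨Y', hs, hinf, hdec⟩ :=
      decide_finset Fam ((insert (sInf Y) F).powerset) {z ∈ Y | sInf Y < z} (tail_infinite h2 _)
    exact ⟨(insert (sInf Y) F, Y'),
      ⟨hs.trans ((Set.sep_subset _ _).trans h1), hinf, hdec⟩, rfl, hs⟩
  obtain ⟨σ, hσ0, hσ⟩ : ∃ σ : ℕ → Finset ℕ × Set ℕ, σ 0 = (∅, M) ∧
      ∀ n, Inv (σ n) ∧ (σ (n+1)).1 = insert (sInf (σ n).2) (σ n).1 ∧
        (σ (n+1)).2 ⊆ {z ∈ (σ n).2 | sInf (σ n).2 < z} := by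
    choose stepF h1 h2 h3 using step
    let g : {p : Finset ℕ × Set ℕ // Inv p} → {p : Finset ℕ × Set ℕ // Inv p} :=
      fun p => ⟨stepF p.1 p.2, h1 p.1 p.2⟩
    refine ⟨fun n => (g^[n] ⟨(∅, M), inv0⟩).1, rfl, fun n => ?_⟩
    have hit : g^[n+1] ⟨(∅, M), inv0⟩ = g (g^[n] ⟨(∅, M), inv0⟩) :=
      Function.iterate_succ_apply' g n _
    refine ⟨(g^[n] ⟨(∅, M), inv0⟩).2, ?_, ?_⟩
    · show (g^[n+1] ⟨(∅, M), inv0⟩).1.1 =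
        insert (sInf (g^[n] ⟨(∅, M), inv0⟩).1.2) (g^[n] ⟨(∅, M), inv0⟩).1.1
      rw [hit]; exact h2 _ _
    · show (g^[n+1] ⟨(∅, M), inv0⟩).1.2 ⊆
        {z ∈ (g^[n] ⟨(∅, M), inv0⟩).1.2 | sInf (g^[n] ⟨(∅, M), inv0⟩).1.2 < z}
      rw [hit]; exact h3 _ _
  set Fn : ℕ → Finset ℕ := fun n => (σ n).1 with hFn'
  set Yn : ℕ → Set ℕ := fun n => (σ n).2 with hYn'
  set y : ℕ → ℕ := fun n => sInf (Yn n) with hy'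
  have hYM : ∀ n, Yn n ⊆ M := fun n => ((hσ n).1).1
  have hYinf : ∀ n, (Yn n).Infinite := fun n => ((hσ n).1).2.1
  have hdecided : ∀ n, ∀ s ∈ (Fn n).powerset, Acc Fam s (Yn n) ∨ Rej Fam s (Yn n) :=
    fun n => ((hσ n).1).2.2
  have hymem : ∀ n, y n ∈ Yn n := fun n => Nat.sInf_mem (hYinf n).nonempty
  have hrel2 : ∀ n, Yn (n+1) ⊆ {z ∈ Yn n | y n < z} := fun n => (hσ n).2.2
  have hrel1 : ∀ n, Fn (n+1) = insert (y n) (Fn n) := fun n => (hσ n).2.1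
  have hchain : ∀ i j, i ≤ j → Yn j ⊆ Yn i := by
    intro i j hij
    induction j, hij using Nat.le_induction with
    | base => exact subset_rfl
    | succ j _ ih => exact ((hrel2 j).trans (Set.sep_subset _ _)).trans ih
  have hlt : ∀ n z, z ∈ Yn (n+1) → y n < z := fun n z hz => ((hrel2 n) hz).2
  have hmono : StrictMono y :=
    strictMono_nat_of_lt_succ (fun n => hlt n (y (n+1)) (hymem (n+1)))
  have hyin : ∀ i j, i ≤ j → y j ∈ Yn i := fun i j hij => hchain i j hij (hymem j)
  have hFim : ∀ n, Fn n = (Finset.range n).image y := by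
    intro n
    induction n with
    | zero => rw [show Fn 0 = (σ 0).1 from rfl, hσ0]; simp
    | succ n ih => rw [hrel1 n, ih, Finset.range_add_one, Finset.image_insert]
  have hY0 : Yn 0 = M := by rw [show Yn 0 = (σ 0).2 from rfl, hσ0]
  -- Key lemma: if s is rejected, then only finitely many one-point extensions
  -- along the diagonal sequence fail to be rejected.
  have lemR : ∀ (s : Finset ℕ) (J : ℕ), s ⊆ (Finset.range J).image y →
      Rej Fam s (Yn J) →
      {m : ℕ | J ≤ m ∧ ¬ Rej Fam (insert (y m) s) (Yn (m+1))}.Finite := by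
    intro s J hsJ hR
    by_contra hfin
    have hfin' : {m : ℕ | J ≤ m ∧ ¬ Rej Fam (insert (y m) s) (Yn (m+1))}.Infinite := hfin
    clear hfin
    have hAccm : ∀ m, J ≤ m → ¬ Rej Fam (insert (y m) s) (Yn (m+1)) →
        Acc Fam (insert (y m) s) (Yn (m+1)) := by
      intro m hJm hnot
      have hsub : insert (y m) s ∈ (Fn (m+1)).powerset := by
        rw [Finset.mem_powerset, hFim]
        intro x hx
        rcases Finset.mem_insert.mp hx with h | h
        · subst h
          exact Finset.mem_image_of_mem y (Finset.mem_range.mpr (Nat.lt_succ_self m))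
        · exact Finset.image_subset_image (Finset.range_subset_range.mpr (by omega)) (hsJ h)
      rcases hdecided (m+1) _ hsub with hA | hR'
      · exact hA
      · exact absurd hR' hnot
    have hZinf : (y '' {m : ℕ | J ≤ m ∧ ¬ Rej Fam (insert (y m) s) (Yn (m+1))}).Infinite :=
      hfin'.image hmono.injective.injOn
    have hZsub : y '' {m : ℕ | J ≤ m ∧ ¬ Rej Fam (insert (y m) s) (Yn (m+1))} ⊆ Yn J := by
      rintro _ ⟨m, hm, rfl⟩
      exact hyin J m hm.1
    refine hR _ hZsub hZinf ?_
    intro W hW hWinf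
    have hwW : sInf W ∈ W := Nat.sInf_mem hWinf.nonempty
    obtain ⟨m, hmBad, hwm⟩ := hW hwW
    have hW'sub : {x ∈ W | sInf W < x} ⊆ Yn (m+1) := by
      rintro x ⟨hxW, hwx⟩
      obtain ⟨m', _, rfl⟩ := hW hxW
      have hmm' : m < m' := by
        have hyy : y m < y m' := by rw [hwm]; exact hwx
        exact hmono.lt_iff_lt.mp hyy
      exact hyin (m+1) m' hmm'
    obtain ⟨t, htseg, htF⟩ :=
      hAccm m hmBad.1 hmBad.2 {x ∈ W | sInf W < x} hW'sub (tail_infinite hWinf _)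
    refine ⟨insert (sInf W) t, ⟨?_, ?_⟩, ?_⟩
    · intro x hx
      simp only [Finset.coe_insert, Set.mem_insert_iff] at hx
      rcases hx with rfl | hx
      · exact hwW
      · exact (htseg.1 hx).1
    · intro z hzW hz x hx
      have hne : z ≠ sInf W := by
        rintro rfl
        exact hz (Finset.mem_insert_self _ _)
      have hzw : sInf W < z := lt_of_le_of_ne (Nat.sInf_le hzW) (Ne.symm hne)
      rcases Finset.mem_insert.mp hx with rfl | hxt
      · exact hzw
      · exact htseg.2 z ⟨hzW, hzw⟩ (fun hzt => hz (Finset.mem_insert_of_mem hzt)) x hxt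
    · have hum : s ∪ insert (sInf W) t = insert (y m) s ∪ t := by
        rw [hwm]
        ext a
        simp only [Finset.mem_union, Finset.mem_insert]
        tauto
      rw [hum]; exact htF
  -- second fusion: build N all of whose finite subsets are rejected
  set Inv2 : Finset ℕ × ℕ → Prop := fun p =>
    p.1 ⊆ (Finset.range p.2).image y ∧ ∀ s ∈ p.1.powerset, Rej Fam s (Yn p.2) with hInv2
  have inv20 : Inv2 (∅, 0) := by
    constructor
    · simp
    · intro s hs
      simp only [Finset.powerset_empty, Finset.mem_singleton] at hs
      subst hs
      rw [hY0]
      exact hrej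
  have step2 : ∀ p : Finset ℕ × ℕ, Inv2 p →
      ∃ q : Finset ℕ × ℕ, Inv2 q ∧
        ∃ j, p.2 ≤ j ∧ q.1 = insert (y j) p.1 ∧ q.2 = j + 1 := by
    rintro ⟨G, J⟩ ⟨hG, hRej⟩
    have hBig : {m : ℕ | J ≤ m}.Infinite := by
      have : {m : ℕ | J ≤ m} = Set.Ici J := rfl
      rw [this]
      exact Set.Ici_infinite J
    have hFin : (⋃ s ∈ G.powerset,
        {m : ℕ | J ≤ m ∧ ¬ Rej Fam (insert (y m) s) (Yn (m+1))}).Finite :=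
      Set.Finite.biUnion (G.powerset.finite_toSet) (fun s hs =>
        lemR s J ((Finset.mem_powerset.mp hs).trans hG) (hRej s hs))
    obtain ⟨j, hj⟩ := (hBig.diff hFin).nonempty
    obtain ⟨hjJ, hjn⟩ := hj
    have hjJ' : J ≤ j := hjJ
    have hstepRej : ∀ s ∈ G.powerset, Rej Fam (insert (y j) s) (Yn (j+1)) := by
      intro s hs
      by_contra hnot
      exact hjn (Set.mem_biUnion hs ⟨hjJ, hnot⟩)
    refine ⟨(insert (y j) G, j+1), ⟨?_, ?_⟩, j, hjJ, rfl, rfl⟩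
    · intro x hx
      rcases Finset.mem_insert.mp hx with rfl | hxG
      · exact Finset.mem_image_of_mem y (Finset.mem_range.mpr (Nat.lt_succ_self j))
      · exact Finset.image_subset_image (Finset.range_subset_range.mpr (by omega)) (hG hxG)
    · intro s hs
      rw [Finset.mem_powerset] at hs
      by_cases hyj : y j ∈ s
      · have hs' : s.erase (y j) ∈ G.powerset := by
          rw [Finset.mem_powerset]
          intro x hx
          have hx2 := hs (Finset.mem_of_mem_erase hx)
          rcases Finset.mem_insert.mp hx2 with rfl | h
          · exact absurd rfl (Finset.ne_of_mem_erase hx)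
          · exact h
        have hre := hstepRej _ hs'
        rwa [Finset.insert_erase hyj] at hre
      · have hsG : s ∈ G.powerset := by
          rw [Finset.mem_powerset]
          intro x hx
          rcases Finset.mem_insert.mp (hs hx) with rfl | h
          · exact absurd hx hyj
          · exact h
        exact (hRej s hsG).mono (hchain J (j+1) (by omega))
  obtain ⟨τ, hτ0, hτ⟩ : ∃ τ : ℕ → Finset ℕ × ℕ, τ 0 = (∅, 0) ∧
      ∀ n, Inv2 (τ n) ∧ ∃ j, (τ n).2 ≤ j ∧ (τ (n+1)).1 = insert (y j) (τ n).1 ∧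
        (τ (n+1)).2 = j + 1 := by
    choose stepF h1 h2 using step2
    let g : {p : Finset ℕ × ℕ // Inv2 p} → {p : Finset ℕ × ℕ // Inv2 p} :=
      fun p => ⟨stepF p.1 p.2, h1 p.1 p.2⟩
    refine ⟨fun n => (g^[n] ⟨(∅, 0), inv20⟩).1, rfl, fun n => ?_⟩
    have hit : g^[n+1] ⟨(∅, 0), inv20⟩ = g (g^[n] ⟨(∅, 0), inv20⟩) :=
      Function.iterate_succ_apply' g n _
    refine ⟨(g^[n] ⟨(∅, 0), inv20⟩).2, ?_⟩
    show ∃ j, (g^[n] ⟨(∅, 0), inv20⟩).1.2 ≤ j ∧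
      (g^[n+1] ⟨(∅, 0), inv20⟩).1.1 = insert (y j) (g^[n] ⟨(∅, 0), inv20⟩).1.1 ∧
      (g^[n+1] ⟨(∅, 0), inv20⟩).1.2 = j + 1
    rw [hit]
    exact h2 _ _
  set Gi : ℕ → Finset ℕ := fun n => (τ n).1 with hGi
  have hGmono : ∀ n, Gi n ⊆ Gi (n+1) := by
    intro n
    obtain ⟨j, _, hj2, _⟩ := (hτ n).2
    show (τ n).1 ⊆ (τ (n+1)).1
    rw [hj2]
    exact Finset.subset_insert _ _
  have hGle : ∀ i j, i ≤ j → Gi i ⊆ Gi j := by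
    intro i j hij
    induction j, hij using Nat.le_induction with
    | base => exact subset_rfl
    | succ j _ ih => exact ih.trans (hGmono j)
  have hGcard : ∀ n, n ≤ (Gi n).card := by
    intro n
    induction n with
    | zero => exact Nat.zero_le _
    | succ n ih =>
      obtain ⟨j, hj1, hj2, _⟩ := (hτ n).2
      have hnotmem : y j ∉ Gi n := by
        intro hmem
        have hmem2 := ((hτ n).1).1 hmem
        obtain ⟨i, hi, hiy⟩ := Finset.mem_image.mp hmem2
        have : i = j := hmono.injective hiy
        rw [Finset.mem_range] at hi
        omega
      have hcard : (Gi (n+1)).card = (Gi n).card + 1 := by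
        show (τ (n+1)).1.card = _
        rw [hj2, Finset.card_insert_of_notMem hnotmem]
      omega
  have hNM : (⋃ n, ((Gi n : Finset ℕ) : Set ℕ)) ⊆ M := by
    intro x hx
    obtain ⟨n, hn⟩ := Set.mem_iUnion.mp hx
    have hx2 := ((hτ n).1).1 hn
    obtain ⟨i, _, rfl⟩ := Finset.mem_image.mp hx2
    exact hYM i (hymem i)
  have hNinf : (⋃ n, ((Gi n : Finset ℕ) : Set ℕ)).Infinite := by
    by_contra hfin
    rw [Set.not_infinite] at hfin
    have hle : ∀ n, (Gi n).card ≤ hfin.toFinset.card := by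
      intro n
      apply Finset.card_le_card
      intro x hx
      rw [Set.Finite.mem_toFinset]
      exact Set.mem_iUnion.mpr ⟨n, hx⟩
    have h1 := hGcard (hfin.toFinset.card + 1)
    have h2 := hle (hfin.toFinset.card + 1)
    omega
  have hfind : ∀ s : Finset ℕ, ↑s ⊆ (⋃ n, ((Gi n : Finset ℕ) : Set ℕ)) → ∃ i, s ⊆ Gi i := by
    intro s
    induction s using Finset.induction_on with
    | empty => exact fun _ => ⟨0, Finset.empty_subset _⟩
    | @insert a s _ ih =>
      intro hins
      have hsub : ↑s ⊆ (⋃ n, ((Gi n : Finset ℕ) : Set ℕ)) := by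
        intro x hx
        exact hins (by simp [hx])
      obtain ⟨i1, hi1⟩ := ih hsub
      have haN : a ∈ (⋃ n, ((Gi n : Finset ℕ) : Set ℕ)) := hins (by simp)
      obtain ⟨i2, hi2⟩ := Set.mem_iUnion.mp haN
      refine ⟨max i1 i2, ?_⟩
      intro x hx
      rcases Finset.mem_insert.mp hx with rfl | hxs
      · exact hGle i2 _ (le_max_right _ _) hi2
      · exact hGle i1 _ (le_max_left _ _) (hi1 hxs)
  refine ⟨⋃ n, ((Gi n : Finset ℕ) : Set ℕ), hNM, hNinf, ?_⟩
  intro s hsN hsF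
  obtain ⟨i, hi⟩ := hfind s hsN
  have hrejs : Rej Fam s (Yn (τ i).2) := ((hτ i).1).2 s (Finset.mem_powerset.mpr hi)
  exact hrejs (Yn (τ i).2) subset_rfl (hYinf _) (mem_acc hsF _)

theorem galvin (Fam : Set (Finset ℕ)) (M : Set ℕ) (hM : M.Infinite) :
    ∃ N, N ⊆ M ∧ N.Infinite ∧
      ((∀ Z, Z ⊆ N → Z.Infinite → ∃ t, IsInitSeg t Z ∧ t ∈ Fam) ∨
        ∀ s : Finset ℕ, ↑s ⊆ N → s ∉ Fam) := by
  by_cases h : ∃ N, N ⊆ M ∧ N.Infinite ∧ Acc Fam ∅ N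
  · obtain ⟨N, h1, h2, h3⟩ := h
    refine ⟨N, h1, h2, Or.inl ?_⟩
    intro Z hZ hZi
    obtain ⟨t, ht1, ht2⟩ := h3 Z hZ hZi
    exact ⟨t, ht1, by simpa using ht2⟩
  · push_neg at h
    have hrej : Rej Fam ∅ M := fun Y' h1 h2 => h Y' h1 h2
    obtain ⟨N, h1, h2, h3⟩ := galvin_reject Fam M hM hrej
    exact ⟨N, h1, h2, Or.inr h3⟩

lemma empty_not_mem_barrier {B : Set (Finset ℕ)} {X : Set ℕ} (hX : X.Infinite)
    (hB : IsBarrierOn B X) : ∅ ∉ B := by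
  intro h
  obtain ⟨x, hx⟩ := hX.nonempty
  rw [← hB.1] at hx
  simp only [Set.mem_iUnion, Finset.mem_coe, exists_prop] at hx
  obtain ⟨s, hsB, hxs⟩ := hx
  exact hB.2.1 ∅ h s hsB (Finset.empty_ssubset.mpr ⟨x, hxs⟩)

lemma initseg_comp {s t : Finset ℕ} {Z : Set ℕ} (hs : IsInitSeg s Z) (ht : IsInitSeg t Z) :
    s ⊆ t ∨ t ⊆ s := by
  by_contra h
  push_neg at h
  obtain ⟨h1, h2⟩ := h
  obtain ⟨a, has, hat⟩ := Finset.not_subset.mp h1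
  obtain ⟨b, hbt, hbs⟩ := Finset.not_subset.mp h2
  have hba := ht.2 a (hs.1 has) hat b hbt
  have hab := hs.2 b (ht.1 hbt) hbs a has
  omega

lemma sub_barrier {B : Set (Finset ℕ)} {X : Set ℕ} (hX : X.Infinite) (hB : IsBarrierOn B X)
    {N : Set ℕ} (hNX : N ⊆ X) (hN : N.Infinite) :
    IsBarrierOn {s | s ∈ B ∧ ↑s ⊆ N} N := by
  have hempty := empty_not_mem_barrier hX hB
  refine ⟨?_, ?_, ?_⟩
  · apply Set.Subset.antisymm
    · intro x hx
      simp only [Set.mem_iUnion, Finset.mem_coe, exists_prop, Set.mem_setOf_eq] at hx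
      obtain ⟨s, ⟨_, hs2⟩, hxs⟩ := hx
      exact hs2 hxs
    · intro x hxN
      have hZN : insert x {z ∈ N | x < z} ⊆ N := by
        intro z hz
        rcases hz with rfl | hz
        · exact hxN
        · exact hz.1
      have hZinf : (insert x {z ∈ N | x < z}).Infinite :=
        (tail_infinite hN x).mono (Set.subset_insert _ _)
      obtain ⟨s, hsB, hseg⟩ := hB.2.2 _ (hZN.trans hNX) hZinf
      have hsne : s.Nonempty := by
        rcases Finset.eq_empty_or_nonempty s with rfl | h
        · exact absurd hsB hempty
        · exact h
      have hxs : x ∈ s := by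
        by_contra hxs
        obtain ⟨a, ha⟩ := hsne
        have hax := hseg.2 x (Set.mem_insert _ _) hxs a ha
        have haZ := hseg.1 ha
        rcases Set.mem_insert_iff.mp haZ with h | h
        · omega
        · have := h.2; omega
      simp only [Set.mem_iUnion, Finset.mem_coe, exists_prop, Set.mem_setOf_eq]
      exact ⟨s, ⟨hsB, hseg.1.trans hZN⟩, hxs⟩
  · exact fun s hs t ht => hB.2.1 s hs.1 t ht.1
  · intro Z hZN hZinf
    obtain ⟨s, hsB, hseg⟩ := hB.2.2 Z (hZN.trans hNX) hZinf
    exact ⟨s, ⟨hsB, hseg.1.trans hZN⟩, hseg⟩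

theorem barrier_ramsey : ∀ (r : ℕ) (B : Set (Finset ℕ)) (X : Set ℕ), X.Infinite →
    IsBarrierOn B X → ∀ c : Finset ℕ → ℕ, (∀ s ∈ B, c s < r) →
    ∃ H, H ⊆ X ∧ H.Infinite ∧ ∃ i, ∀ s ∈ B, ↑s ⊆ H → c s = i := by
  intro r
  induction r with
  | zero =>
    intro B X hX hB c hc
    obtain ⟨s, hsB, _⟩ := hB.2.2 X subset_rfl hX
    exact absurd (hc s hsB) (Nat.not_lt_zero _)
  | succ r ih =>
    intro B X hX hB c hc
    obtain ⟨N, hNX, hNinf, hcase⟩ := galvin {s | s ∈ B ∧ c s = r} X hX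
    rcases hcase with ha | hb
    · refine ⟨N, hNX, hNinf, r, ?_⟩
      intro s hsB hsN
      have hZN : ↑s ∪ {z ∈ N | s.sup id < z} ⊆ N :=
        Set.union_subset hsN (Set.sep_subset _ _)
      have hZinf : (↑s ∪ {z ∈ N | s.sup id < z}).Infinite :=
        (tail_infinite hNinf _).mono Set.subset_union_right
      obtain ⟨t, htseg, htB, htc⟩ := ha _ hZN hZinf
      have hsseg : IsInitSeg s (↑s ∪ {z ∈ N | s.sup id < z}) := by
        refine ⟨Set.subset_union_left, ?_⟩
        intro z hz hzs x hx
        rcases hz with hz | hz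
        · exact absurd (by exact_mod_cast hz) hzs
        · exact lt_of_le_of_lt (Finset.le_sup (f := id) hx) hz.2
      have hst : s = t := by
        rcases initseg_comp hsseg htseg with h | h
        · by_contra hne
          exact hB.2.1 s hsB t htB (Finset.ssubset_iff_subset_ne.mpr ⟨h, hne⟩)
        · by_contra hne
          exact hB.2.1 t htB s hsB (Finset.ssubset_iff_subset_ne.mpr ⟨h, Ne.symm hne⟩)
      rw [hst]; exact htc
    · have hsub := sub_barrier hX hB hNX hNinf
      have hc' : ∀ s ∈ {s | s ∈ B ∧ ↑s ⊆ N}, c s < r := by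
        intro s hs
        have h1 := hc s hs.1
        have hne : c s ≠ r := fun he => hb s hs.2 ⟨hs.1, he⟩
        omega
      obtain ⟨H, hHN, hHinf, i, hi⟩ := ih _ N hNinf hsub c hc'
      exact ⟨H, hHN.trans hNX, hHinf, i, fun s hsB hsH => hi s ⟨hsB, hsH.trans hHN⟩ hsH⟩

end RRB

theorem barrier_rainbow_ramsey (B : Set (Finset ℕ)) (X : Set ℕ) (hX : X.Infinite)
    (hB : IsBarrierOn B X) (k : ℕ) (f : Finset ℕ → ℕ)
    (hf : ∀ n : ℕ, ∃ T : Finset (Finset ℕ), T.card ≤ k ∧ ∀ s ∈ B, f s = n → s ∈ T) :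
    ∃ H : Set ℕ, H ⊆ X ∧ H.Infinite ∧
      ∀ s ∈ B, ↑s ⊆ H → ∀ t ∈ B, ↑t ⊆ H → f s = f t → s = t := by
  classical
  choose T hT1 hT2 using hf
  set c : Finset ℕ → ℕ :=
    fun s => ((T (f s)).filter (fun u => Encodable.encode u < Encodable.encode s)).card
    with hc_def
  have hmem : ∀ s ∈ B, s ∈ T (f s) := fun s hs => hT2 (f s) s hs rfl
  have hbound : ∀ s ∈ B, c s < k := by
    intro s hs
    have h1 : ((T (f s)).filter (fun u => Encodable.encode u < Encodable.encode s))
        ⊆ (T (f s)).erase s := by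
      intro x hx
      rw [Finset.mem_filter] at hx
      refine Finset.mem_erase.mpr ⟨?_, hx.1⟩
      intro he
      subst he
      exact lt_irrefl _ hx.2
    have h2 := Finset.card_le_card h1
    have h3 := Finset.card_erase_of_mem (hmem s hs)
    have h4 := hT1 (f s)
    have h5 : 1 ≤ (T (f s)).card := Finset.card_pos.mpr ⟨s, hmem s hs⟩
    simp only [hc_def]
    omega
  obtain ⟨H, hHX, hHinf, i, hconst⟩ := RRB.barrier_ramsey k B X hX hB c hbound
  refine ⟨H, hHX, hHinf, ?_⟩
  have key : ∀ s t : Finset ℕ, s ∈ B → t ∈ B → ↑s ⊆ H → ↑t ⊆ H → f s = f t →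
      Encodable.encode s < Encodable.encode t → False := by
    intro s t hsB htB hsH htH hft henc
    have h1 : c s = i := hconst s hsB hsH
    have h2 : c t = i := hconst t htB htH
    have hsubset : ((T (f s)).filter (fun u => Encodable.encode u < Encodable.encode s))
        ⊂ ((T (f t)).filter (fun u => Encodable.encode u < Encodable.encode t)) := by
      rw [← hft]
      constructor
      · intro x hx
        rw [Finset.mem_filter] at hx ⊢
        exact ⟨hx.1, lt_trans hx.2 henc⟩
      · intro hcon
        have hsmem : s ∈ (T (f s)).filter (fun u => Encodable.encode u < Encodable.encode t) := by
          rw [Finset.mem_filter]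
          exact ⟨hmem s hsB, henc⟩
        have := hcon hsmem
        rw [Finset.mem_filter] at this
        exact lt_irrefl _ this.2
    have hlt := Finset.card_lt_card hsubset
    simp only [hc_def] at h1 h2
    omega
  intro s hsB hsH t htB htH hft
  rcases lt_trichotomy (Encodable.encode s) (Encodable.encode t) with h | h | h
  · exact absurd h (by intro hh; exact key s t hsB htB hsH htH hft hh)
  · exact Encodable.encode_injective h
  · exact absurd h (by intro hh; exact key t s htB hsB htH hsH hft.symm hh)
end

section
/- Galvin's reduction for barriers: Let B be a barrier on X, let c : B → ℕ be a bijection, let f : B → ℕ be k-bounded, and define g : B → {0, ..., k-1} by g(s) = |{ t ∈ B : c(t) < c(s) and f(t) = f(s) }|. Then g is well-defined (the cardinality is < k), and if H ⊆ X is infinite with g constant on B|H, then f is injective on B|H. -/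
theorem galvin_reduction (B : Set (Finset ℕ)) (X : Set ℕ) (hX : X.Infinite)
    (hB : IsBarrierOn B X) (c : Finset ℕ → ℕ) (hc : Set.BijOn c B Set.univ)
    (k : ℕ) (f : Finset ℕ → ℕ)
    (hf : ∀ n : ℕ, ∃ T : Finset (Finset ℕ), T.card ≤ k ∧ ∀ s ∈ B, f s = n → s ∈ T)
    (g : Finset ℕ → ℕ)
    (hg : ∀ s, g s = Set.ncard {t | t ∈ B ∧ c t < c s ∧ f t = f s}) :
    (∀ s ∈ B, g s < k) ∧
      ∀ H : Set ℕ, H ⊆ X → H.Infinite →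
        (∀ s ∈ B, ↑s ⊆ H → ∀ t ∈ B, ↑t ⊆ H → g s = g t) →
        ∀ s ∈ B, ↑s ⊆ H → ∀ t ∈ B, ↑t ⊆ H → f s = f t → s = t := by
  constructor
  · intro s hs
    obtain ⟨T, hTk, hT⟩ := hf (f s)
    have hsT : s ∈ T := hT s hs rfl
    have hsub : {t | t ∈ B ∧ c t < c s ∧ f t = f s} ⊆ ↑(T.erase s) := by
      intro t ht
      simp only [Finset.coe_erase, Set.mem_diff, Set.mem_singleton_iff]
      refine ⟨hT t ht.1 ht.2.2, ?_⟩
      intro h; subst h; exact lt_irrefl _ ht.2.1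
    rw [hg]
    calc Set.ncard {t | t ∈ B ∧ c t < c s ∧ f t = f s} ≤ (T.erase s).card := by
          rw [← Set.ncard_coe_finset]
          exact Set.ncard_le_ncard hsub (T.erase s).finite_toSet
      _ < T.card := Finset.card_erase_lt_of_mem hsT
      _ ≤ k := hTk
  · intro H _ _ hgc s hs hsH t ht htH hfst
    have key : ∀ s ∈ B, ∀ t ∈ B, c s < c t → f s = f t → g s < g t := by
      intro u hu v hv hlt hfe
      rw [hg, hg]
      apply Set.ncard_lt_ncard
      · constructor
        · intro w hw
          exact ⟨hw.1, hw.2.1.trans hlt, hw.2.2.trans hfe⟩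
        · intro hsub
          have : u ∈ {w | w ∈ B ∧ c w < c u ∧ f w = f u} := hsub ⟨hu, hlt, hfe⟩
          exact lt_irrefl _ this.2.1
      · obtain ⟨T, _, hT⟩ := hf (f v)
        exact Set.Finite.subset T.finite_toSet (fun w hw => hT w hw.1 hw.2.2)
    by_contra hne
    have hcne : c s ≠ c t := fun h => hne (hc.injOn hs ht h)
    have hge := hgc s hs hsH t ht htH
    rcases hcne.lt_or_gt with h | h
    · exact absurd hge (Nat.ne_of_lt (key s hs t ht h hfst))
    · exact absurd hge.symm (Nat.ne_of_lt (key t ht s hs h hfst.symm))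
end

section
/- The rainbow Ramsey theorem for 2-bounded colorings follows from the free set theorem on any barrier: let B be a barrier on X, c : B → ℕ a bijection, f : B → ℕ 2-bounded, and define g : B → ℕ by g(s) = min(t \ s) if there exists t ∈ B with c(t) < c(s) and f(t) = f(s) (such a t is unique and t \ s is nonempty), and g(s) = 0 otherwise. If A ⊆ X is infinite and free for g (for all s ∈ B with s ⊆ A, g(s) ∈ A implies g(s) ∈ s), then f is injective on B|A. -/
theorem rainbow_of_free (B : Set (Finset ℕ)) (X : Set ℕ) (hX : X.Infinite)
    (hB : IsBarrierOn B X) (c : Finset ℕ → ℕ) (hc : Set.BijOn c B Set.univ)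
    (f : Finset ℕ → ℕ)
    (hf : ∀ n : ℕ, ∃ T : Finset (Finset ℕ), T.card ≤ 2 ∧ ∀ s ∈ B, f s = n → s ∈ T)
    (g : Finset ℕ → ℕ)
    (hg1 : ∀ s ∈ B, ∀ t ∈ B, c t < c s → f t = f s →
      g s ∈ t \ s ∧ ∀ x ∈ t \ s, g s ≤ x)
    (hg0 : ∀ s ∈ B, (∀ t ∈ B, ¬ (c t < c s ∧ f t = f s)) → g s = 0)
    (A : Set ℕ) (hAX : A ⊆ X) (hA : A.Infinite)
    (hfree : ∀ s ∈ B, ↑s ⊆ A → g s ∈ A → g s ∈ s) :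
    ∀ s ∈ B, ↑s ⊆ A → ∀ t ∈ B, ↑t ⊆ A → f s = f t → s = t := by
  -- one-sided case: if c t < c s then contradiction
  have key : ∀ s ∈ B, ↑s ⊆ A → ∀ t ∈ B, ↑t ⊆ A → f t = f s → c t < c s → False := by
    intro s hs hsA t ht htA hft hlt
    obtain ⟨hmem, -⟩ := hg1 s hs t ht hlt hft
    rw [Finset.mem_sdiff] at hmem
    exact hmem.2 (hfree s hs hsA (htA hmem.1))
  intro s hs hsA t ht htA hfst
  by_contra hne
  have hcne : c s ≠ c t := fun h => hne (hc.injOn hs ht h)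
  rcases lt_or_gt_of_ne hcne with h | h
  · exact key t ht htA s hs hsA hfst h
  · exact key s hs hsA t ht htA hfst.symm h
end
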